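/- arXiv:1701.05243 — 8 statements merged into one kernel-verified Lean document; each statement's English description precedes it below -/
import Mathlib

section
/- For any coupling M of probability distributions p and q (i.e., an n×m nonnegative matrix whose row sums are p and column sums are q), the vector of entries of M, sorted non-increasingly, is majorized by the greatest lower bound p ∧ q in the majorization lattice. -/
open Finset

/-- Majorization via prefix sums (vectors as functions ℕ → ℝ, padded with zeros). -/
def Maj (p q : ℕ → ℝ) : Prop :=
  ∀ i : ℕ, ∑ k ∈ Finset.range i, p k ≤ ∑ k ∈ Finset.range i, q k

/-- A probability vector of length `n`, sorted non-increasingly, zero beyond `n`. -/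
def IsProbVec (n : ℕ) (p : ℕ → ℝ) : Prop :=
  (∀ i, 0 ≤ p i) ∧ (∀ i j : ℕ, i ≤ j → p j ≤ p i) ∧
  (∑ k ∈ Finset.range n, p k = 1) ∧ (∀ i, n ≤ i → p i = 0)

/-- The greatest lower bound `p ∧ q` in the majorization lattice. -/
noncomputable def meet (p q : ℕ → ℝ) : ℕ → ℝ := fun i =>
  min (∑ k ∈ Finset.range (i + 1), p k) (∑ k ∈ Finset.range (i + 1), q k) -
  min (∑ k ∈ Finset.range i, p k) (∑ k ∈ Finset.range i, q k)

/-- Shannon entropy (base 2) of the first `n` components. -/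
noncomputable def H2 (n : ℕ) (p : ℕ → ℝ) : ℝ :=
  ∑ k ∈ Finset.range n, -(p k * Real.logb 2 (p k))

/-- Shannon entropy (base 2) of the entries of an `n × m` matrix. -/
noncomputable def Hmat (n m : ℕ) (M : ℕ → ℕ → ℝ) : ℝ :=
  ∑ i ∈ Finset.range n, ∑ j ∈ Finset.range m, -(M i j * Real.logb 2 (M i j))

/-- `M` is a coupling of `p` and `q`: nonnegative, row sums `p`, column sums `q`. -/
def IsCoupling (n m : ℕ) (p q : ℕ → ℝ) (M : ℕ → ℕ → ℝ) : Prop :=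
  (∀ i j, 0 ≤ M i j) ∧ (∀ i < n, ∑ j ∈ Finset.range m, M i j = p i) ∧
  (∀ j < m, ∑ i ∈ Finset.range n, M i j = q j)

/-- The `half` operator: duplicates and halves each component. -/
noncomputable def half (p : ℕ → ℝ) : ℕ → ℝ := fun i => p (i / 2) / 2

/-- Iterated `half` operator. -/
noncomputable def halfIter : ℕ → (ℕ → ℝ) → (ℕ → ℝ)
  | 0, p => p
  | (i + 1), p => half (halfIter i p)

/-- Iterated majorization meet of `p 0, p 1, …, p k`. -/
noncomputable def bigMeet (p : ℕ → ℕ → ℝ) : ℕ → (ℕ → ℝ)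
  | 0 => p 0
  | (k + 1) => meet (bigMeet p k) (p (k + 1))

/-!
Every entry `M i j` lies in row `i` and in column `j`, so the mass of any `k` entries of a
coupling is at most the total mass of the (at most `k`) rows they occupy, and likewise for
columns. Since `p` and `q` are sorted, `k` rows carry at most the `k` largest masses
`p 0 + ⋯ + p (k-1)`, and similarly for `q`. The prefix sums of `p ∧ q` are exactly the minima of
these two bounds.
-/

theorem Antitone.sum_le_sum_range_card {β : Type*} [AddCommMonoid β] [PartialOrder β]
    [IsOrderedAddMonoid β] {r : ℕ → β} (hr : Antitone r) (T : Finset ℕ) :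
    ∑ i ∈ T, r i ≤ ∑ k ∈ range T.card, r k := by
  induction T using Finset.induction_on_max with
  | empty => simp
  | insert a s ha ih =>
    have has : a ∉ s := fun h => lt_irrefl a (ha a h)
    have hcard : s.card ≤ a := by
      simpa using card_le_card fun x hx => mem_range.2 (ha x hx)
    rw [sum_insert has, card_insert_of_notMem has, sum_range_succ, add_comm]
    exact add_le_add ih (hr hcard)

theorem Antitone.sum_le_sum_range {β : Type*} [AddCommMonoid β] [PartialOrder β]
    [IsOrderedAddMonoid β] {r : ℕ → β} (hr : Antitone r) (hr₀ : 0 ≤ r) {T : Finset ℕ} {c : ℕ}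
    (hc : T.card ≤ c) : ∑ i ∈ T, r i ≤ ∑ k ∈ range c, r k :=
  (hr.sum_le_sum_range_card T).trans <|
    sum_le_sum_of_subset_of_nonneg (range_subset_range.2 hc) fun i _ _ => hr₀ i

section Rows

variable {α γ R : Type*} [DecidableEq α] [DecidableEq γ] [AddCommMonoid R] [PartialOrder R]
  [IsOrderedAddMonoid R] {f : α → γ → R}

theorem sum_le_sum_image_fst (hf : ∀ i j, 0 ≤ f i j) {S : Finset (α × γ)} {t : Finset γ}
    (hS : S.image Prod.snd ⊆ t) :
    ∑ ij ∈ S, f ij.1 ij.2 ≤ ∑ i ∈ S.image Prod.fst, ∑ j ∈ t, f i j :=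
  (sum_le_sum_of_subset_of_nonneg (S.subset_product.trans (product_subset_product_right hS))
    fun _ _ _ => hf _ _).trans_eq (sum_product _ _ _)

theorem sum_le_sum_image_snd (hf : ∀ i j, 0 ≤ f i j) {S : Finset (α × γ)} {s : Finset α}
    (hS : S.image Prod.fst ⊆ s) :
    ∑ ij ∈ S, f ij.1 ij.2 ≤ ∑ j ∈ S.image Prod.snd, ∑ i ∈ s, f i j :=
  (sum_le_sum_of_subset_of_nonneg (S.subset_product.trans (product_subset_product_left hS))
    fun _ _ _ => hf _ _).trans_eq (sum_product_right _ _ _)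

end Rows

theorem sum_range_meet (p q : ℕ → ℝ) (c : ℕ) :
    ∑ k ∈ range c, meet p q k = min (∑ k ∈ range c, p k) (∑ k ∈ range c, q k) := by
  simpa [meet] using sum_range_sub (fun i => min (∑ k ∈ range i, p k) (∑ k ∈ range i, q k)) c

theorem stmt1 (n m : ℕ) (p q : ℕ → ℝ) (hp : IsProbVec n p) (hq : IsProbVec m q)
    (M : ℕ → ℕ → ℝ) (hM : IsCoupling n m p q M) :
    ∀ S : Finset (ℕ × ℕ), S ⊆ Finset.range n ×ˢ Finset.range m →
      ∑ ij ∈ S, M ij.1 ij.2 ≤ ∑ k ∈ Finset.range S.card, meet p q k := by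
  intro S hS
  obtain ⟨hM₀, hrow, hcol⟩ := hM
  have hfst : S.image Prod.fst ⊆ range n := (image_subset_image hS).trans subset_product_image_fst
  have hsnd : S.image Prod.snd ⊆ range m := (image_subset_image hS).trans subset_product_image_snd
  rw [sum_range_meet]
  refine le_min ?_ ?_
  · calc ∑ ij ∈ S, M ij.1 ij.2
        ≤ ∑ i ∈ S.image Prod.fst, ∑ j ∈ range m, M i j := sum_le_sum_image_fst hM₀ hsnd
      _ = ∑ i ∈ S.image Prod.fst, p i :=
          sum_congr rfl fun i hi => hrow i (mem_range.1 (hfst hi))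
      _ ≤ ∑ k ∈ range S.card, p k := Antitone.sum_le_sum_range hp.2.1 hp.1 card_image_le
  · calc ∑ ij ∈ S, M ij.1 ij.2
        ≤ ∑ j ∈ S.image Prod.snd, ∑ i ∈ range n, M i j := sum_le_sum_image_snd hM₀ hfst
      _ = ∑ j ∈ S.image Prod.snd, q j :=
          sum_congr rfl fun j hj => hcol j (mem_range.1 (hsnd hj))
      _ ≤ ∑ k ∈ range S.card, q k := Antitone.sum_le_sum_range hq.2.1 hq.1 card_image_le
end

section
/- For probability vectors p and q (sorted non-increasingly), H(p ∧ q) ≥ max(H(p), H(q)); consequently, for any coupling M of p and q, H(M) ≥ H(p ∧ q) ≥ max(H(p), H(q)). -/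
open Finset

/- ===================  auxiliary development =================== -/

noncomputable def fent (x : ℝ) : ℝ := -(x * Real.log x)

lemma fent_zero : fent 0 = 0 := by simp [fent]

noncomputable def Hn (n : ℕ) (p : ℕ → ℝ) : ℝ := ∑ k ∈ Finset.range n, fent (p k)

lemma H2_eq (n : ℕ) (p : ℕ → ℝ) : H2 n p = Hn n p / Real.log 2 := by
  rw [H2, Hn, Finset.sum_div]
  refine Finset.sum_congr rfl fun k _ => ?_
  simp only [fent, Real.logb]
  ring

lemma Hmat_eq (n : ℕ) (M : ℕ → ℕ → ℝ) :
    Hmat n n M = (∑ i ∈ Finset.range n, ∑ j ∈ Finset.range n, fent (M i j)) / Real.log 2 := by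
  rw [Hmat, Finset.sum_div]
  refine Finset.sum_congr rfl fun i _ => ?_
  rw [Finset.sum_div]
  refine Finset.sum_congr rfl fun j _ => ?_
  simp only [fent, Real.logb]
  ring

/-- supergradient inequality for `fent` at a positive point. -/
lemma sg (a b : ℝ) (ha : 0 < a) (hb : 0 ≤ b) :
    fent b ≤ fent a + (-(Real.log a + 1)) * (b - a) := by
  rcases eq_or_lt_of_le hb with h | h
  · rw [← h, fent_zero]
    simp only [fent]
    nlinarith [ha]
  · have key : Real.log (a / b) ≤ a / b - 1 := Real.log_le_sub_one_of_pos (by positivity)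
    rw [Real.log_div (ne_of_gt ha) (ne_of_gt h)] at key
    have h2 : b * (Real.log a - Real.log b) ≤ b * (a / b - 1) :=
      mul_le_mul_of_nonneg_left key (le_of_lt h)
    have hb' : b * (a / b - 1) = a - b := by field_simp
    simp only [fent]
    nlinarith [h2, hb']

/-- Karamata-type inequality: if `a` is sorted non-increasingly, nonnegative,
vanishes at `N`, and its prefix sums are below those of `b` with equal totals,
then the entropy of `b` is at most that of `a`. -/
lemma karamata (N : ℕ) (a b : ℕ → ℝ)
    (ha0 : ∀ i, 0 ≤ a i) (hb0 : ∀ i, 0 ≤ b i)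
    (hsort : ∀ i j : ℕ, i ≤ j → a j ≤ a i)
    (haN : a N = 0)
    (hsum : ∑ k ∈ Finset.range N, a k = ∑ k ∈ Finset.range N, b k)
    (hmaj : ∀ i, i ≤ N → ∑ k ∈ Finset.range i, a k ≤ ∑ k ∈ Finset.range i, b k) :
    Hn N b ≤ Hn N a := by
  classical
  have ex : ∃ i, a i = 0 := ⟨N, haN⟩
  set k := Nat.find ex with hk
  have hkN : k ≤ N := Nat.find_le haN
  have hak : ∀ i, k ≤ i → a i = 0 := fun i hi =>
    le_antisymm (by have h0 : a k = 0 := Nat.find_spec ex; simpa [h0] using hsort k i hi) (ha0 i)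
  have hapos : ∀ i, i < k → 0 < a i := fun i hi =>
    lt_of_le_of_ne (ha0 i) (Ne.symm (Nat.find_min ex hi))
  set A := fun m => ∑ j ∈ Finset.range m, a j with hA
  set B := fun m => ∑ j ∈ Finset.range m, b j with hB
  have hsplitA : ∀ m l : ℕ, m ≤ l → (∀ i, m ≤ i → i < l → a i = 0) → A l = A m := by
    intro m l hml hz
    have h1 : A m + ∑ i ∈ Finset.Ico m l, a i = A l := by
      simp only [hA, Finset.range_eq_Ico]
      exact Finset.sum_Ico_consecutive a (Nat.zero_le m) hml
    have h2 : ∑ i ∈ Finset.Ico m l, a i = 0 :=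
      Finset.sum_eq_zero fun i hi => hz i (Finset.mem_Ico.1 hi).1 (Finset.mem_Ico.1 hi).2
    linarith
  have hAkN : A N = A k := hsplitA k N hkN (fun i hi _ => hak i hi)
  have hBmono : ∀ i j : ℕ, i ≤ j → B i ≤ B j := by
    intro i j hij
    exact Finset.sum_le_sum_of_subset_of_nonneg
      (Finset.range_subset_range.2 hij) (fun t _ _ => hb0 t)
  have hBk : B k = B N := by
    have h1 : A k ≤ B k := hmaj k hkN
    have h2 : B N = A N := hsum.symm
    have h3 : B k ≤ B N := hBmono k N hkN
    linarith [hAkN]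
  have hbk : ∀ i, k ≤ i → i < N → b i = 0 := by
    intro i hi hiN
    have h1 : B k + ∑ j ∈ Finset.Ico k N, b j = B N := by
      simp only [hB, Finset.range_eq_Ico]
      exact Finset.sum_Ico_consecutive b (Nat.zero_le k) hkN
    have h2 : ∑ j ∈ Finset.Ico k N, b j = 0 := by linarith [hBk]
    have := (Finset.sum_eq_zero_iff_of_nonneg (fun t _ => hb0 t)).1 h2 i
      (Finset.mem_Ico.2 ⟨hi, hiN⟩)
    exact this
  -- reduce sums to range k
  have hHb : Hn N b = ∑ i ∈ Finset.range k, fent (b i) := by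
    rw [Hn, Finset.range_eq_Ico, ← Finset.sum_Ico_consecutive _ (Nat.zero_le k) hkN]
    have : ∑ i ∈ Finset.Ico k N, fent (b i) = 0 :=
      Finset.sum_eq_zero fun i hi => by
        rw [hbk i (Finset.mem_Ico.1 hi).1 (Finset.mem_Ico.1 hi).2, fent_zero]
    rw [this, add_zero, Finset.range_eq_Ico]
  have hHa : Hn N a = ∑ i ∈ Finset.range k, fent (a i) := by
    rw [Hn, Finset.range_eq_Ico, ← Finset.sum_Ico_consecutive _ (Nat.zero_le k) hkN]
    have : ∑ i ∈ Finset.Ico k N, fent (a i) = 0 :=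
      Finset.sum_eq_zero fun i hi => by
        rw [hak i (Finset.mem_Ico.1 hi).1, fent_zero]
    rw [this, add_zero, Finset.range_eq_Ico]
  rcases Nat.eq_zero_or_pos k with hk0 | hk1
  · rw [hHa, hHb, hk0]; simp
  -- the supergradient slopes
  have hlast : 0 < a (k - 1) := hapos (k - 1) (Nat.sub_lt hk1 one_pos)
  set c := fun i => -(Real.log (max (a i) (a (k - 1))) + 1) with hc
  have hcmono : ∀ i j : ℕ, i ≤ j → c i ≤ c j := by
    intro i j hij
    have h1 : 0 < max (a j) (a (k - 1)) := lt_of_lt_of_le hlast (le_max_right _ _)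
    have h2 : max (a j) (a (k - 1)) ≤ max (a i) (a (k - 1)) :=
      max_le_max (hsort i j hij) le_rfl
    have := Real.log_le_log h1 h2
    simp only [hc]
    linarith
  have hptw : ∀ i, i < k → fent (b i) ≤ fent (a i) + c i * (b i - a i) := by
    intro i hi
    have h1 : a (k - 1) ≤ a i := hsort i (k - 1) (Nat.le_sub_one_of_lt hi)
    have h2 : max (a i) (a (k - 1)) = a i := max_eq_left h1
    simp only [hc, h2]
    exact sg (a i) (b i) (hapos i hi) (hb0 i)
  -- Abel summation bound
  have abel : ∀ m, m ≤ k → ∑ i ∈ Finset.range m, c i * (b i - a i) ≤ c m * (B m - A m) := by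
    intro m
    induction m with
    | zero => intro _; simp [hA, hB]
    | succ m ih =>
      intro hm
      have hmk : m ≤ k := Nat.le_of_succ_le hm
      have hD : 0 ≤ B (m + 1) - A (m + 1) := by
        have := hmaj (m + 1) (le_trans hm hkN)
        simp only [hA, hB]; linarith [this]
      have hBsucc : B (m + 1) = B m + b m := Finset.sum_range_succ b m
      have hAsucc : A (m + 1) = A m + a m := Finset.sum_range_succ a m
      calc ∑ i ∈ Finset.range (m + 1), c i * (b i - a i)
          = (∑ i ∈ Finset.range m, c i * (b i - a i)) + c m * (b m - a m) :=
            Finset.sum_range_succ _ m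
        _ ≤ c m * (B m - A m) + c m * (b m - a m) := by linarith [ih hmk]
        _ = c m * (B (m + 1) - A (m + 1)) := by rw [hBsucc, hAsucc]; ring
        _ ≤ c (m + 1) * (B (m + 1) - A (m + 1)) :=
            mul_le_mul_of_nonneg_right (hcmono m (m + 1) (Nat.le_succ m)) hD
  have hDk : B k - A k = 0 := by
    have := hAkN; have := hBk; have := hsum
    simp only [hA, hB] at *
    linarith
  have main : ∑ i ∈ Finset.range k, fent (b i) - ∑ i ∈ Finset.range k, fent (a i) ≤ 0 := by
    have h1 : ∑ i ∈ Finset.range k, (fent (b i) - fent (a i)) ≤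
        ∑ i ∈ Finset.range k, c i * (b i - a i) := by
      refine Finset.sum_le_sum fun i hi => ?_
      have := hptw i (Finset.mem_range.1 hi)
      linarith
    have h2 := abel k le_rfl
    rw [hDk, mul_zero] at h2
    rw [Finset.sum_sub_distrib] at h1
    linarith
  rw [hHa, hHb]; linarith

/-- Sum over a finite set of a sorted sequence is at most the corresponding prefix sum. -/
lemma subset_sum_le (p : ℕ → ℝ) (hsort : ∀ i j : ℕ, i ≤ j → p j ≤ p i) :
    ∀ (s : ℕ) (S : Finset ℕ), S.card = s → ∑ i ∈ S, p i ≤ ∑ i ∈ Finset.range s, p i := by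
  intro s
  induction s with
  | zero =>
    intro S hS
    rw [Finset.card_eq_zero.1 hS]
    simp
  | succ s ih =>
    intro S hS
    have hne : S.Nonempty := Finset.card_pos.1 (by omega)
    set m := S.max' hne with hm
    have hmem : m ∈ S := S.max'_mem hne
    have hsm : s ≤ m := by
      by_contra h
      push_neg at h
      have : S ⊆ Finset.range (m + 1) := fun x hx =>
        Finset.mem_range.2 (Nat.lt_succ_of_le (S.le_max' x hx))
      have := Finset.card_le_card this
      rw [hS, Finset.card_range] at this
      omega
    have hcard : (S.erase m).card = s := by
      rw [Finset.card_erase_of_mem hmem, hS]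
      omega
    calc ∑ i ∈ S, p i = p m + ∑ i ∈ S.erase m, p i := (Finset.add_sum_erase S p hmem).symm
      _ ≤ p s + ∑ i ∈ Finset.range s, p i := add_le_add (hsort s m hsm) (ih _ hcard)
      _ = ∑ i ∈ Finset.range (s + 1), p i := by rw [Finset.sum_range_succ]; ring

lemma sum_range_getD (l : List ℝ) : ∀ t, t ≤ l.length →
    ∑ i ∈ Finset.range t, l.getD i 0 = (l.take t).sum := by
  intro t
  induction t with
  | zero => intro _; simp
  | succ t ih =>
    intro h
    have ht : t < l.length := h
    rw [Finset.sum_range_succ, ih (le_of_lt ht), List.sum_take_succ l t ht,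
      List.getD_eq_getElem l 0 ht]

/- ============ properties of prefix sums and meet ============ -/

section prefixes
variable {n : ℕ} {p q : ℕ → ℝ}

lemma prefix_mono (hp : IsProbVec n p) : ∀ i j : ℕ, i ≤ j →
    ∑ k ∈ Finset.range i, p k ≤ ∑ k ∈ Finset.range j, p k := fun i j hij =>
  Finset.sum_le_sum_of_subset_of_nonneg (Finset.range_subset_range.2 hij) (fun t _ _ => hp.1 t)

lemma prefix_ge (hp : IsProbVec n p) : ∀ i, n ≤ i → ∑ k ∈ Finset.range i, p k = 1 := by
  intro i hi
  have h1 : ∑ k ∈ Finset.range n, p k + ∑ k ∈ Finset.Ico n i, p k = ∑ k ∈ Finset.range i, p k := by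
    simp only [Finset.range_eq_Ico]
    exact Finset.sum_Ico_consecutive p (Nat.zero_le n) hi
  have h2 : ∑ k ∈ Finset.Ico n i, p k = 0 :=
    Finset.sum_eq_zero fun k hk => hp.2.2.2 k (Finset.mem_Ico.1 hk).1
  rw [hp.2.2.1, h2] at h1
  linarith

lemma meet_prefix (p q : ℕ → ℝ) (i : ℕ) :
    ∑ k ∈ Finset.range i, meet p q k =
      min (∑ k ∈ Finset.range i, p k) (∑ k ∈ Finset.range i, q k) := by
  have := Finset.sum_range_sub
    (fun j => min (∑ k ∈ Finset.range j, p k) (∑ k ∈ Finset.range j, q k)) i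
  simpa [meet] using this

lemma meet_nonneg (hp : IsProbVec n p) (hq : IsProbVec n q) (i : ℕ) : 0 ≤ meet p q i := by
  have h1 := prefix_mono hp i (i + 1) (Nat.le_succ i)
  have h2 := prefix_mono hq i (i + 1) (Nat.le_succ i)
  have := min_le_min h1 h2
  simp only [meet]
  linarith

lemma meet_sorted (hp : IsProbVec n p) (hq : IsProbVec n q) :
    ∀ i j : ℕ, i ≤ j → meet p q j ≤ meet p q i := by
  have hstep : ∀ i : ℕ, meet p q (i + 1) ≤ meet p q i := by
    intro i
    simp only [meet]
    set P0 := ∑ k ∈ Finset.range i, p k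
    set Q0 := ∑ k ∈ Finset.range i, q k
    set P1 := ∑ k ∈ Finset.range (i + 1), p k with hP1
    set Q1 := ∑ k ∈ Finset.range (i + 1), q k with hQ1
    set P2 := ∑ k ∈ Finset.range (i + 2), p k with hP2
    set Q2 := ∑ k ∈ Finset.range (i + 2), q k with hQ2
    have hpc : P2 + P0 ≤ P1 + P1 := by
      have e1 : P1 = P0 + p i := Finset.sum_range_succ p i
      have e2 : P2 = P1 + p (i + 1) := Finset.sum_range_succ p (i + 1)
      have := hp.2.1 i (i + 1) (Nat.le_succ i)
      linarith
    have hqc : Q2 + Q0 ≤ Q1 + Q1 := by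
      have e1 : Q1 = Q0 + q i := Finset.sum_range_succ q i
      have e2 : Q2 = Q1 + q (i + 1) := Finset.sum_range_succ q (i + 1)
      have := hq.2.1 i (i + 1) (Nat.le_succ i)
      linarith
    have hm2P : min P2 Q2 ≤ P2 := min_le_left _ _
    have hm2Q : min P2 Q2 ≤ Q2 := min_le_right _ _
    have hm0P : min P0 Q0 ≤ P0 := min_le_left _ _
    have hm0Q : min P0 Q0 ≤ Q0 := min_le_right _ _
    rcases le_total P1 Q1 with h | h
    · rw [min_eq_left h]
      linarith
    · rw [min_eq_right h]
      linarith
  intro i j hij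
  exact antitone_nat_of_succ_le hstep hij

lemma meet_zero (hp : IsProbVec n p) (hq : IsProbVec n q) :
    ∀ i, n ≤ i → meet p q i = 0 := by
  intro i hi
  simp only [meet]
  rw [prefix_ge hp i hi, prefix_ge hq i hi,
    prefix_ge hp (i + 1) (le_trans hi (Nat.le_succ i)),
    prefix_ge hq (i + 1) (le_trans hi (Nat.le_succ i))]
  simp

lemma meet_sum_eq (hp : IsProbVec n p) (hq : IsProbVec n q) :
    ∀ i, n ≤ i → ∑ k ∈ Finset.range i, meet p q k = 1 := by
  intro i hi
  rw [meet_prefix, prefix_ge hp i hi, prefix_ge hq i hi]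
  simp

end prefixes

/- ============ part 1 ============ -/

lemma part1 {n : ℕ} {p q : ℕ → ℝ} (hp : IsProbVec n p) (hq : IsProbVec n q) :
    Hn n p ≤ Hn n (meet p q) ∧ Hn n q ≤ Hn n (meet p q) := by
  constructor
  · refine karamata n (meet p q) p (meet_nonneg hp hq) hp.1 (meet_sorted hp hq)
      (meet_zero hp hq n le_rfl) ?_ ?_
    · rw [meet_sum_eq hp hq n le_rfl, hp.2.2.1]
    · intro i _
      rw [meet_prefix]
      exact min_le_left _ _
  · refine karamata n (meet p q) q (meet_nonneg hp hq) hq.1 (meet_sorted hp hq)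
      (meet_zero hp hq n le_rfl) ?_ ?_
    · rw [meet_sum_eq hp hq n le_rfl, hq.2.2.1]
    · intro i _
      rw [meet_prefix]
      exact min_le_right _ _

/- ============ part 2 ============ -/

lemma part2 {n : ℕ} {p q : ℕ → ℝ} (hn : 0 < n) (hp : IsProbVec n p) (hq : IsProbVec n q)
    (M : ℕ → ℕ → ℝ) (hM : IsCoupling n n p q M) :
    Hn n (meet p q) ≤ ∑ i ∈ Finset.range n, ∑ j ∈ Finset.range n, fent (M i j) := by
  classical
  obtain ⟨hM0, hrow, hcol⟩ := hM
  set N := n * n with hN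
  have hnN : n ≤ N := Nat.le_mul_of_pos_left n hn
  set pos : List (ℕ × ℕ) := (Finset.range n ×ˢ Finset.range n).toList with hpos
  set r : ℕ × ℕ → ℕ × ℕ → Prop := fun x y => M y.1 y.2 ≤ M x.1 x.2 with hr
  haveI : DecidableRel r := fun x y => Real.decidableLE _ _
  haveI : IsTotal (ℕ × ℕ) r := ⟨fun x y => le_total _ _⟩
  haveI : IsTrans (ℕ × ℕ) r := ⟨fun x y z h1 h2 => le_trans h2 h1⟩
  set L : List (ℕ × ℕ) := List.insertionSort r pos with hL
  have hperm : L.Perm pos := List.perm_insertionSort r pos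
  have hsorted : L.Pairwise r := List.pairwise_insertionSort r pos
  have hnodup : L.Nodup := hperm.nodup_iff.2 (Finset.nodup_toList _)
  have hlen : L.length = N := by
    rw [hperm.length_eq, hpos, Finset.length_toList, Finset.card_product, Finset.card_range, hN]
  have hmemL : ∀ x ∈ L, x ∈ Finset.range n ×ˢ Finset.range n := by
    intro x hx
    have := hperm.mem_iff.1 hx
    rwa [hpos, Finset.mem_toList] at this
  set vals : List ℝ := L.map (fun x => M x.1 x.2) with hvals
  have hvlen : vals.length = N := by rw [hvals, List.length_map, hlen]
  set b : ℕ → ℝ := fun i => vals.getD i 0 with hb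
  have hb0 : ∀ i, 0 ≤ b i := by
    intro i
    by_cases h : i < vals.length
    · have h' : i < L.length := by rwa [hvals, List.length_map] at h
      have hbi : b i = M (L[i]).1 (L[i]).2 := by
        simp only [hb, hvals]
        rw [List.getD_eq_getElem _ 0 h]
        simp only [hvals, List.getElem_map]
      rw [hbi]
      exact hM0 _ _
    · have hbi : b i = 0 := by
        simp only [hb]
        exact List.getD_eq_default vals 0 (le_of_not_gt h)
      rw [hbi]
  have hbsort : ∀ i j : ℕ, i ≤ j → b j ≤ b i := by
    intro i j hij
    by_cases h : j < vals.length
    · have hi : i < vals.length := lt_of_le_of_lt hij h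
      rcases eq_or_lt_of_le hij with he | hlt
      · rw [he]
      · have hlin : L.length = vals.length := by rw [hvals, List.length_map]
        have hrel := hsorted.rel_get_of_lt (a := ⟨i, by omega⟩) (b := ⟨j, by omega⟩)
          (by simp [Fin.lt_def]; omega)
        simp only [hr, List.get_eq_getElem] at hrel
        have e1 : b i = M (L[i]'(by omega)).1 (L[i]'(by omega)).2 := by
          simp only [hb, hvals]
          rw [List.getD_eq_getElem _ 0 hi]
          simp only [hvals, List.getElem_map]
        have e2 : b j = M (L[j]'(by omega)).1 (L[j]'(by omega)).2 := by
          simp only [hb, hvals]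
          rw [List.getD_eq_getElem _ 0 h]
          simp only [hvals, List.getElem_map]
        rw [e1, e2]
        exact hrel
    · have hbj : b j = 0 := by
        simp only [hb]
        exact List.getD_eq_default vals 0 (le_of_not_gt h)
      rw [hbj]; exact hb0 i
  have hbN : b N = 0 := by
    simp only [hb]
    exact List.getD_eq_default vals 0 (by omega)
  -- total sum of entries is 1
  have hsum_pos : ∑ x ∈ Finset.range n ×ˢ Finset.range n, M x.1 x.2 = 1 := by
    rw [Finset.sum_product']
    calc ∑ i ∈ Finset.range n, ∑ j ∈ Finset.range n, M i j
        = ∑ i ∈ Finset.range n, p i :=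
          Finset.sum_congr rfl fun i hi => hrow i (Finset.mem_range.1 hi)
      _ = 1 := hp.2.2.1
  have hvals_sum : vals.sum = 1 := by
    have h1 : vals.Perm (pos.map fun x => M x.1 x.2) := hperm.map _
    rw [h1.sum_eq]
    rw [← List.sum_toFinset _ (Finset.nodup_toList _), Finset.toList_toFinset]
    exact hsum_pos
  -- prefix sums of b bounded by prefixes of p and q
  have hprefix : ∀ t, t ≤ N → ∑ i ∈ Finset.range t, b i ≤
      min (∑ k ∈ Finset.range t, p k) (∑ k ∈ Finset.range t, q k) := by
    intro t ht
    have htake : ∑ i ∈ Finset.range t, b i = ((L.take t).map fun x => M x.1 x.2).sum := by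
      simp only [hb]
      rw [sum_range_getD vals t (by omega), hvals, ← List.map_take]
    set S : Finset (ℕ × ℕ) := (L.take t).toFinset with hS
    have htnodup : (L.take t).Nodup := (List.take_sublist t L).nodup hnodup
    have hsum_S : ((L.take t).map fun x => M x.1 x.2).sum = ∑ x ∈ S, M x.1 x.2 := by
      rw [hS, List.sum_toFinset _ htnodup]
    have hScard : S.card = t := by
      rw [hS, List.toFinset_card_of_nodup htnodup, List.length_take, hlen]
      omega
    have hSsub : S ⊆ Finset.range n ×ˢ Finset.range n := by
      intro x hx
      rw [hS, List.mem_toFinset] at hx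
      exact hmemL x (List.mem_of_mem_take hx)
    refine le_min ?_ ?_
    · -- rows argument
      set rows := S.image Prod.fst with hrows
      have h1 : ∑ x ∈ S, M x.1 x.2 ≤ ∑ x ∈ rows ×ˢ Finset.range n, M x.1 x.2 := by
        refine Finset.sum_le_sum_of_subset_of_nonneg ?_ (fun x _ _ => hM0 x.1 x.2)
        intro x hx
        refine Finset.mem_product.2 ⟨Finset.mem_image_of_mem _ hx, ?_⟩
        exact (Finset.mem_product.1 (hSsub hx)).2
      have h2 : ∑ x ∈ rows ×ˢ Finset.range n, M x.1 x.2 = ∑ i ∈ rows, p i := by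
        rw [Finset.sum_product']
        refine Finset.sum_congr rfl fun i hi => ?_
        obtain ⟨x, hx1, hx2⟩ := Finset.mem_image.1 hi
        have := (Finset.mem_product.1 (hSsub hx1)).1
        rw [hx2] at this
        exact hrow i (Finset.mem_range.1 this)
      have h3 : ∑ i ∈ rows, p i ≤ ∑ i ∈ Finset.range rows.card, p i :=
        subset_sum_le p hp.2.1 rows.card rows rfl
      have h4 : ∑ i ∈ Finset.range rows.card, p i ≤ ∑ i ∈ Finset.range t, p i := by
        refine Finset.sum_le_sum_of_subset_of_nonneg ?_ (fun x _ _ => hp.1 x)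
        refine Finset.range_subset_range.2 ?_
        calc rows.card ≤ S.card := Finset.card_image_le
          _ = t := hScard
      rw [htake, hsum_S]
      linarith
    · -- columns argument
      set cols := S.image Prod.snd with hcols
      have h1 : ∑ x ∈ S, M x.1 x.2 ≤ ∑ x ∈ Finset.range n ×ˢ cols, M x.1 x.2 := by
        refine Finset.sum_le_sum_of_subset_of_nonneg ?_ (fun x _ _ => hM0 x.1 x.2)
        intro x hx
        refine Finset.mem_product.2 ⟨(Finset.mem_product.1 (hSsub hx)).1,
          Finset.mem_image_of_mem _ hx⟩
      have h2 : ∑ x ∈ Finset.range n ×ˢ cols, M x.1 x.2 = ∑ j ∈ cols, q j := by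
        rw [Finset.sum_product_right]
        refine Finset.sum_congr rfl fun j hj => ?_
        obtain ⟨x, hx1, hx2⟩ := Finset.mem_image.1 hj
        have := (Finset.mem_product.1 (hSsub hx1)).2
        rw [hx2] at this
        exact hcol j (Finset.mem_range.1 this)
      have h3 : ∑ j ∈ cols, q j ≤ ∑ j ∈ Finset.range cols.card, q j :=
        subset_sum_le q hq.2.1 cols.card cols rfl
      have h4 : ∑ j ∈ Finset.range cols.card, q j ≤ ∑ j ∈ Finset.range t, q j := by
        refine Finset.sum_le_sum_of_subset_of_nonneg ?_ (fun x _ _ => hq.1 x)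
        refine Finset.range_subset_range.2 ?_
        calc cols.card ≤ S.card := Finset.card_image_le
          _ = t := hScard
      rw [htake, hsum_S]
      linarith
  -- apply karamata
  have hkar : Hn N (meet p q) ≤ Hn N b := by
    refine karamata N b (meet p q) hb0 (meet_nonneg hp hq) hbsort hbN ?_ ?_
    · have h1 : ∑ k ∈ Finset.range N, b k = vals.sum := by
        simp only [hb]
        rw [sum_range_getD vals N (by omega), List.take_of_length_le (by omega)]
      rw [h1, hvals_sum, meet_sum_eq hp hq N hnN]
    · intro i hi
      rw [meet_prefix]
      exact hprefix i hi
  -- identify the two sides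
  have hHb : Hn N b = ∑ i ∈ Finset.range n, ∑ j ∈ Finset.range n, fent (M i j) := by
    have h0 : ∀ i ∈ Finset.range N, fent (b i) = (vals.map fent).getD i 0 := by
      intro i hi
      have hilt : i < vals.length := by rw [hvlen]; exact Finset.mem_range.1 hi
      simp only [hb]
      rw [List.getD_eq_getElem vals 0 hilt,
        List.getD_eq_getElem (vals.map fent) 0 (by rw [List.length_map]; exact hilt)]
      simp
    rw [Hn, Finset.sum_congr rfl h0,
      sum_range_getD (vals.map fent) N (by rw [List.length_map]; omega),
      List.take_of_length_le (by rw [List.length_map]; omega)]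
    have h1 : (vals.map fent).Perm (pos.map fun x => fent (M x.1 x.2)) := by
      have := (hperm.map fun x => M x.1 x.2).map fent
      simpa [hvals, List.map_map, Function.comp_def] using this
    rw [h1.sum_eq, ← List.sum_toFinset _ (Finset.nodup_toList _), Finset.toList_toFinset,
      Finset.sum_product' (Finset.range n) (Finset.range n) (fun i j => fent (M i j))]
  have hHmeet : Hn n (meet p q) = Hn N (meet p q) := by
    simp only [Hn, Finset.range_eq_Ico]
    rw [← Finset.sum_Ico_consecutive _ (Nat.zero_le n) hnN]
    have : ∑ i ∈ Finset.Ico n N, fent (meet p q i) = 0 :=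
      Finset.sum_eq_zero fun i hi => by
        rw [meet_zero hp hq i (Finset.mem_Ico.1 hi).1, fent_zero]
    rw [this, add_zero]
  rw [hHmeet, ← hHb]
  exact hkar

theorem stmt4 (n : ℕ) (p q : ℕ → ℝ) (hp : IsProbVec n p) (hq : IsProbVec n q) :
    max (H2 n p) (H2 n q) ≤ H2 n (meet p q) ∧
    ∀ M : ℕ → ℕ → ℝ, IsCoupling n n p q M →
      H2 n (meet p q) ≤ Hmat n n M ∧ max (H2 n p) (H2 n q) ≤ Hmat n n M := by
  rcases Nat.eq_zero_or_pos n with hn | hn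
  · exfalso
    have := hp.2.2.1
    rw [hn] at this
    simp at this
  have hlog2 : 0 < Real.log 2 := Real.log_pos one_lt_two
  obtain ⟨h1, h2⟩ := part1 hp hq
  have hmax : max (H2 n p) (H2 n q) ≤ H2 n (meet p q) := by
    rw [H2_eq, H2_eq, H2_eq]
    refine max_le ?_ ?_ <;> · gcongr
  refine ⟨hmax, fun M hM => ?_⟩
  have hp2 := part2 hn hp hq M hM
  have hmeetM : H2 n (meet p q) ≤ Hmat n n M := by
    rw [H2_eq, Hmat_eq]
    gcongr
  exact ⟨hmeetM, le_trans hmax hmeetM⟩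
end

section
/- Let A be a finite multiset of nonnegative reals, z > 0 with z ≥ y for all y ∈ A, and let x ≥ 0 satisfy x ≤ z + ∑_{y∈A} y. Then there exists a subset Q ⊆ A and a real z_d with 0 ≤ z_d ≤ z such that z_d + ∑_{y∈Q} y = x. -/
/-! Greedy: if `x ≤ z` take `zd = x` and `Q = 0`; otherwise `x > z ≥ a` for any `a ∈ A`,
so put `a` into `Q` and continue with `x - a`. -/

open Finset

theorem Multiset.exists_le_add_sum_eq {α : Type*} [AddCommGroup α] [LinearOrder α]
    [IsOrderedAddMonoid α] {A : Multiset α} {z x : α} (hdom : ∀ y ∈ A, y ≤ z) (hx : 0 ≤ x)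
    (hxz : x ≤ z + A.sum) : ∃ Q ≤ A, ∃ zd, 0 ≤ zd ∧ zd ≤ z ∧ zd + Q.sum = x := by
  induction A using Multiset.induction generalizing x with
  | empty => exact ⟨0, le_rfl, x, hx, by simpa using hxz, by simp⟩
  | cons a s ih =>
    rcases le_or_gt x z with hle | hgt
    · exact ⟨0, Multiset.zero_le _, x, hx, hle, by simp⟩
    have ha : a ≤ z := hdom a (Multiset.mem_cons_self a s)
    rw [Multiset.sum_cons] at hxz
    obtain ⟨Q, hQ, zd, hzd0, hzdz, hsum⟩ :=
      ih (fun y hy => hdom y (Multiset.mem_cons_of_mem hy)) (sub_nonneg.2 (ha.trans hgt.le))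
        (by rw [sub_le_iff_le_add]; simpa only [add_comm, add_left_comm] using hxz)
    refine ⟨a ::ₘ Q, Multiset.cons_le_cons a hQ, zd, hzd0, hzdz, ?_⟩
    rw [Multiset.sum_cons, add_left_comm, hsum, add_sub_cancel]

theorem stmt6_general (A : Multiset ℝ) (z : ℝ)
    (hdom : ∀ y ∈ A, y ≤ z) (x : ℝ) (hx : 0 ≤ x) (hxz : x ≤ z + A.sum) :
    ∃ Q : Multiset ℝ, Q ≤ A ∧ ∃ zd : ℝ, 0 ≤ zd ∧ zd ≤ z ∧ zd + Q.sum = x :=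
  Multiset.exists_le_add_sum_eq hdom hx hxz

theorem stmt6 (A : Multiset ℝ) (hA : ∀ y ∈ A, 0 ≤ y) (z : ℝ) (hz : 0 < z)
    (hdom : ∀ y ∈ A, y ≤ z) (x : ℝ) (hx : 0 ≤ x) (hxz : x ≤ z + A.sum) :
    ∃ Q : Multiset ℝ, Q ≤ A ∧ ∃ zd : ℝ, 0 ≤ zd ∧ zd ≤ z ∧ zd + Q.sum = x :=
  stmt6_general A z hdom x hx hxz
end

section
/- For any two probability vectors p and q of length n, there exists a coupling M of p and q with H(M) ≤ H(p ∧ q) + 1; consequently H(M) ≤ min over all couplings N of H(N) + 1. -/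
open Finset
open MeasureTheory

noncomputable def phiK (u : ℝ) : ℝ → ℝ := fun t => (max (u - t) 0 - u * (1 - t)) / t

lemma phiK_int (u : ℝ) (h0 : 0 ≤ u) (h1 : u ≤ 1) :
    IntervalIntegrable (phiK u) volume 0 1 ∧
    ∫ t in (0:ℝ)..1, phiK u t = u * Real.log u := by
  rcases eq_or_lt_of_le h0 with h|hu
  · -- u = 0
    have he : ∀ t ∈ Set.Ioc (0:ℝ) 1, phiK u t = 0 := by
      intro t ht
      simp only [phiK, ← h]
      rw [max_eq_right (by linarith [ht.1])]
      ring
    constructor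
    · rw [intervalIntegrable_iff]
      have : Set.uIoc (0:ℝ) 1 = Set.Ioc 0 1 := Set.uIoc_of_le (by norm_num)
      rw [this]
      exact (integrableOn_congr_fun he measurableSet_Ioc).2 (integrableOn_const measure_Ioc_lt_top.ne)
    · rw [intervalIntegral.integral_of_le (by norm_num),
        MeasureTheory.setIntegral_congr_fun measurableSet_Ioc he]
      simp [← h]
  · -- 0 < u
    have hi1 : IntervalIntegrable (phiK u) volume 0 u := by
      rw [intervalIntegrable_iff, Set.uIoc_of_le h0]
      apply (integrableOn_congr_fun (g := fun _ => u - 1) ?_ measurableSet_Ioc).2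
      · exact integrableOn_const measure_Ioc_lt_top.ne
      · intro t ht
        have ht0 : (t:ℝ) ≠ 0 := ne_of_gt ht.1
        simp only [phiK]
        rw [max_eq_left (by linarith [ht.2])]
        field_simp
        ring
    have hi2 : IntervalIntegrable (phiK u) volume u 1 := by
      rw [intervalIntegrable_iff, Set.uIoc_of_le h1]
      apply (integrableOn_congr_fun (g := fun t => u - u / t) ?_ measurableSet_Ioc).2
      · have hc : ContinuousOn (fun t : ℝ => u - u / t) (Set.uIcc u 1) := by
          apply ContinuousOn.sub continuousOn_const
          apply ContinuousOn.div continuousOn_const continuousOn_id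
          intro t ht
          rw [Set.uIcc_of_le h1] at ht
          exact ne_of_gt (lt_of_lt_of_le hu ht.1)
        have := hc.intervalIntegrable (μ := volume)
        rw [intervalIntegrable_iff, Set.uIoc_of_le h1] at this
        exact this
      · intro t ht
        have ht0 : (0:ℝ) < t := lt_of_le_of_lt h0 ht.1
        simp only [phiK]
        rw [max_eq_right (by linarith [ht.1])]
        field_simp
        ring
    have v1 : ∫ t in (0:ℝ)..u, phiK u t = u * (u - 1) := by
      rw [intervalIntegral.integral_of_le h0]
      rw [MeasureTheory.setIntegral_congr_fun measurableSet_Ioc (g := fun _ => u - 1)]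
      · rw [MeasureTheory.setIntegral_const]
        simp only [Real.volume_Ioc, sub_zero, smul_eq_mul]
        rw [Real.volume_real_Ioc_of_le h0, sub_zero]
      · intro t ht
        have ht0 : (t:ℝ) ≠ 0 := ne_of_gt ht.1
        simp only [phiK]
        rw [max_eq_left (by linarith [ht.2])]
        field_simp
        ring
    have v2 : ∫ t in u..1, phiK u t = u * (1 - u) + u * Real.log u := by
      rw [intervalIntegral.integral_of_le h1]
      rw [MeasureTheory.setIntegral_congr_fun measurableSet_Ioc (g := fun t => u - u * (1/t))]
      · rw [← intervalIntegral.integral_of_le h1]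
        rw [intervalIntegral.integral_sub intervalIntegrable_const]
        · rw [intervalIntegral.integral_const_mul, integral_one_div]
          · simp only [intervalIntegral.integral_const, smul_eq_mul, mul_one]
            rw [Real.log_div one_ne_zero (ne_of_gt hu)]
            simp; ring
          · rw [Set.uIcc_of_le h1]
            intro hmem
            exact absurd hmem.1 (not_le.2 hu)
        · apply IntervalIntegrable.const_mul
          apply ContinuousOn.intervalIntegrable
          apply ContinuousOn.div continuousOn_const continuousOn_id
          intro t ht
          rw [Set.uIcc_of_le h1] at ht
          exact ne_of_gt (lt_of_lt_of_le hu ht.1)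
      · intro t ht
        have ht0 : (0:ℝ) < t := lt_of_le_of_lt h0 ht.1
        simp only [phiK]
        rw [max_eq_right (by linarith [ht.1])]
        field_simp
        ring
    refine ⟨hi1.trans hi2, ?_⟩
    rw [← intervalIntegral.integral_add_adjacent_intervals hi1 hi2, v1, v2]
    ring

lemma sum_mul_log_ge {ι κ : Type} (s : Finset ι) (t : Finset κ) (x : ι → ℝ) (y : κ → ℝ)
    (hx0 : ∀ i ∈ s, 0 ≤ x i) (hx1 : ∀ i ∈ s, x i ≤ 1)
    (hy0 : ∀ j ∈ t, 0 ≤ y j) (hy1 : ∀ j ∈ t, y j ≤ 1)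
    (hsum : ∑ i ∈ s, x i = ∑ j ∈ t, y j)
    (hdom : ∀ τ : ℝ, 0 < τ → τ < 1 → ∑ j ∈ t, max (y j - τ) 0 ≤ ∑ i ∈ s, max (x i - τ) 0) :
    ∑ j ∈ t, y j * Real.log (y j) ≤ ∑ i ∈ s, x i * Real.log (x i) := by
  have hxint : ∀ i ∈ s, IntervalIntegrable (phiK (x i)) volume 0 1 :=
    fun i hi => (phiK_int (x i) (hx0 i hi) (hx1 i hi)).1
  have hyint : ∀ j ∈ t, IntervalIntegrable (phiK (y j)) volume 0 1 :=
    fun j hj => (phiK_int (y j) (hy0 j hj) (hy1 j hj)).1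
  have key : ∀ τ ∈ Set.Icc (0:ℝ) 1,
      (∑ j ∈ t, fun τ' => phiK (y j) τ') τ ≤ (∑ i ∈ s, fun τ' => phiK (x i) τ') τ := by
    intro τ hτ
    simp only [Finset.sum_apply]
    rcases eq_or_lt_of_le hτ.1 with h0|h0
    · simp [phiK, ← h0, div_zero]
    rcases eq_or_lt_of_le hτ.2 with h1|h1
    · subst h1
      have hz : ∀ u : ℝ, 0 ≤ u → u ≤ 1 → phiK u 1 = 0 := by
        intro u hu0 hu1
        simp only [phiK]
        rw [max_eq_right (by linarith)]
        ring
      rw [Finset.sum_eq_zero (fun j hj => hz _ (hy0 j hj) (hy1 j hj)),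
        Finset.sum_eq_zero (fun i hi => hz _ (hx0 i hi) (hx1 i hi))]
    · have hτ0 : τ ≠ 0 := ne_of_gt h0
      have e : ∀ {γ : Type} (c : Finset γ) (w : γ → ℝ),
          ∑ j ∈ c, phiK (w j) τ
            = ((∑ j ∈ c, max (w j - τ) 0) - (∑ j ∈ c, w j) * (1 - τ))/τ := by
        intro γ c w
        rw [sub_div, Finset.sum_div, Finset.sum_mul, Finset.sum_div,
          ← Finset.sum_sub_distrib]
        exact Finset.sum_congr rfl (fun j hj => by rw [phiK, sub_div]; try ring)
      rw [e s x, e t y]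
      rw [div_le_div_iff_of_pos_right h0]
      have := hdom τ h0 h1
      nlinarith [hsum]
  have mono := intervalIntegral.integral_mono_on (by norm_num : (0:ℝ) ≤ 1)
    (IntervalIntegrable.sum t hyint) (IntervalIntegrable.sum s hxint) key
  have ey : ∫ u in (0:ℝ)..1, (∑ i ∈ t, phiK (y i)) u = ∑ j ∈ t, ∫ τ in (0:ℝ)..1, phiK (y j) τ := by
    rw [← intervalIntegral.integral_finset_sum hyint]
    apply intervalIntegral.integral_congr
    intro τ _; simp [Finset.sum_apply]
  have ex : ∫ u in (0:ℝ)..1, (∑ i ∈ s, phiK (x i)) u = ∑ i ∈ s, ∫ τ in (0:ℝ)..1, phiK (x i) τ := by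
    rw [← intervalIntegral.integral_finset_sum hxint]
    apply intervalIntegral.integral_congr
    intro τ _; simp [Finset.sum_apply]
  rw [ey, ex] at mono
  calc ∑ j ∈ t, y j * Real.log (y j)
      = ∑ j ∈ t, ∫ τ in (0:ℝ)..1, phiK (y j) τ :=
        Finset.sum_congr rfl (fun j hj => ((phiK_int (y j) (hy0 j hj) (hy1 j hj)).2).symm)
    _ ≤ ∑ i ∈ s, ∫ τ in (0:ℝ)..1, phiK (x i) τ := mono
    _ = ∑ i ∈ s, x i * Real.log (x i) :=
        Finset.sum_congr rfl (fun i hi => (phiK_int (x i) (hx0 i hi) (hx1 i hi)).2)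

noncomputable def PF (p : ℕ → ℝ) (i : ℕ) : ℝ := ∑ k ∈ Finset.range i, p k

noncomputable def cM (p q : ℕ → ℝ) (i j : ℕ) : ℝ :=
  max 0 (min (PF p (i+1)) (PF q (j+1)) - max (PF p i) (PF q j))

section main
variable {n : ℕ} {p q : ℕ → ℝ}

lemma PF_nonneg (hp : IsProbVec n p) (i : ℕ) : 0 ≤ PF p i :=
  Finset.sum_nonneg (fun k _ => hp.1 k)

lemma PF_mono (hp : IsProbVec n p) {i j : ℕ} (h : i ≤ j) : PF p i ≤ PF p j :=
  Finset.sum_le_sum_of_subset_of_nonneg (Finset.range_subset_range.2 h) (fun k _ _ => hp.1 k)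

lemma PF_succ (i : ℕ) : PF p (i+1) = PF p i + p i := Finset.sum_range_succ _ _

lemma PF_zero : PF p 0 = 0 := Finset.sum_range_zero _

lemma PF_eq_one (hp : IsProbVec n p) {i : ℕ} (h : n ≤ i) : PF p i = 1 := by
  unfold PF
  rw [← Finset.sum_range_add_sum_Ico _ h, hp.2.2.1,
    Finset.sum_eq_zero (fun k hk => hp.2.2.2 k (Finset.mem_Ico.1 hk).1), add_zero]

lemma PF_le_one (hp : IsProbVec n p) (i : ℕ) : PF p i ≤ 1 := by
  rcases le_total i n with h|h
  · calc PF p i ≤ PF p n := PF_mono hp h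
      _ = 1 := PF_eq_one hp le_rfl
  · exact le_of_eq (PF_eq_one hp h)

lemma id1 (a b c d : ℝ) (hab : a ≤ b) (hcd : c ≤ d) :
    max 0 (min b d - max a c) = max a (min d b) - max a (min c b) := by
  rcases le_total a c with h1|h1 <;> rcases le_total b d with h2|h2 <;>
    rcases le_total b c with h3|h3 <;> rcases le_total a d with h4|h4 <;>
      simp only [max_def, min_def] <;> split_ifs <;> linarith

lemma id2 (a b c : ℝ) (hab : a ≤ b) : max a (min c b) - a = min c b - min c a := by
  rcases le_total c a with h|h <;> rcases le_total c b with h2|h2 <;>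
    simp only [max_def, min_def] <;> split_ifs <;> linarith

lemma cM_nonneg (i j : ℕ) : 0 ≤ cM p q i j := le_max_left _ _

lemma cM_step (hp : IsProbVec n p) (hq : IsProbVec n q) (i j : ℕ) :
    cM p q i j = max (PF p i) (min (PF q (j+1)) (PF p (i+1)))
      - max (PF p i) (min (PF q j) (PF p (i+1))) :=
  id1 _ _ _ _ (PF_mono hp (Nat.le_succ i)) (PF_mono hq (Nat.le_succ j))

lemma cM_rowpart (hp : IsProbVec n p) (hq : IsProbVec n q) (i r : ℕ) :
    ∑ j ∈ range r, cM p q i j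
      = min (PF q r) (PF p (i+1)) - min (PF q r) (PF p i) := by
  rw [Finset.sum_congr rfl (fun j _ => cM_step hp hq i j),
    Finset.sum_range_sub (fun j => max (PF p i) (min (PF q j) (PF p (i+1))))]
  rw [PF_zero, min_eq_left (PF_nonneg hp (i+1)), max_eq_left (PF_nonneg hp i)]
  exact id2 _ _ _ (PF_mono hp (Nat.le_succ i))

lemma cM_block (hp : IsProbVec n p) (hq : IsProbVec n q) (r : ℕ) :
    ∑ i ∈ range r, ∑ j ∈ range r, cM p q i j = min (PF p r) (PF q r) := by
  rw [Finset.sum_congr rfl (fun i _ => cM_rowpart hp hq i r),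
    Finset.sum_range_sub (fun i => min (PF q r) (PF p i))]
  rw [PF_zero, min_eq_right (PF_nonneg hq r), sub_zero, min_comm]

lemma cM_symm (i j : ℕ) : cM p q i j = cM q p j i := by
  unfold cM
  rw [min_comm (PF q (j+1)) (PF p (i+1)), max_comm (PF q j) (PF p i)]

lemma cM_row (hp : IsProbVec n p) (hq : IsProbVec n q) {i : ℕ} (hi : i < n) :
    ∑ j ∈ range n, cM p q i j = p i := by
  rw [cM_rowpart hp hq, PF_eq_one hq le_rfl,
    min_eq_right (PF_le_one hp (i+1)), min_eq_right (PF_le_one hp i), PF_succ]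
  ring

lemma cM_col (hp : IsProbVec n p) (hq : IsProbVec n q) {j : ℕ} (hj : j < n) :
    ∑ i ∈ range n, cM p q i j = q j := by
  rw [Finset.sum_congr rfl (fun i _ => cM_symm i j)]
  exact cM_row hq hp hj

lemma cM_le_one (hp : IsProbVec n p) (hq : IsProbVec n q) (i j : ℕ) :
    cM p q i j ≤ 1 := by
  apply max_le (by norm_num)
  have h1 := min_le_left (PF p (i+1)) (PF q (j+1))
  have h2 := le_max_left (PF p i) (PF q j)
  have := PF_le_one hp (i+1)
  have := PF_nonneg hp i
  linarith

lemma cM_pos (h : 0 < cM p q i j) :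
    max (PF p i) (PF q j) < min (PF p (i+1)) (PF q (j+1)) := by
  by_contra hc
  push_neg at hc
  rw [cM, max_eq_left (by linarith)] at h
  exact lt_irrefl 0 h

lemma cM_stair (hp : IsProbVec n p) (hq : IsProbVec n q) {i j i' j' : ℕ}
    (h : 0 < cM p q i j) (h' : 0 < cM p q i' j') (hii : i < i') : j ≤ j' := by
  have h1 := cM_pos h
  have h2 := cM_pos h'
  by_contra hc
  push_neg at hc
  have e1 : PF q j < PF p (i+1) :=
    lt_of_le_of_lt (le_max_right _ _) (lt_of_lt_of_le h1 (min_le_left _ _))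
  have e2 : PF p i' < PF q (j'+1) :=
    lt_of_le_of_lt (le_max_left _ _) (lt_of_lt_of_le h2 (min_le_right _ _))
  have e3 : PF p (i+1) ≤ PF p i' := PF_mono hp hii
  have e4 : PF q (j'+1) ≤ PF q j := PF_mono hq hc
  linarith

lemma support_card (hp : IsProbVec n p) (hq : IsProbVec n q) {r : ℕ} (hr : 1 ≤ r) :
    ((range r ×ˢ range r).filter fun c => 0 < cM p q c.1 c.2).card ≤ 2*r - 1 := by
  have H := Finset.card_le_card_of_injOn
    (s := (range r ×ˢ range r).filter fun c => 0 < cM p q c.1 c.2)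
    (t := range (2*r - 1)) (fun c : ℕ × ℕ => c.1 + c.2) ?_ ?_
  · simpa using H
  · intro c hc
    simp only [Finset.coe_filter, Set.mem_setOf_eq, Finset.mem_coe, Finset.mem_filter, Finset.mem_product, Finset.mem_range] at hc ⊢
    omega
  · intro c hc c' hc' he
    simp only [Finset.coe_filter, Set.mem_setOf_eq, Finset.mem_product,
      Finset.mem_range] at hc hc'
    simp only at he
    rcases lt_trichotomy c.1 c'.1 with h|h|h
    · have := cM_stair hp hq hc.2 hc'.2 h
      exfalso; omega
    · exact Prod.ext h (by omega)
    · have := cM_stair hp hq hc'.2 hc.2 h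
      exfalso; omega

lemma star (hp : IsProbVec n p) (hq : IsProbVec n q) {τ : ℝ} (hτ : 0 ≤ τ)
    {r : ℕ} (hr : r ≤ n) :
    min (PF p r) (PF q r) - 2*r*τ
      ≤ ∑ c ∈ range n ×ˢ range n, max (cM p q c.1 c.2 - τ) 0 := by
  have hRnn : (0:ℝ) ≤ ∑ c ∈ range n ×ˢ range n, max (cM p q c.1 c.2 - τ) 0 :=
    Finset.sum_nonneg (fun c _ => le_max_right _ _)
  rcases Nat.eq_zero_or_pos r with rfl|hr1
  · simp only [PF_zero, min_self, Nat.cast_zero]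
    linarith
  · set S := (range r ×ˢ range r).filter (fun c => 0 < cM p q c.1 c.2) with hS
    have hsub : range r ×ˢ range r ⊆ range n ×ˢ range n :=
      Finset.product_subset_product (Finset.range_subset_range.2 hr) (Finset.range_subset_range.2 hr)
    have h1 : ∑ c ∈ range r ×ˢ range r, max (cM p q c.1 c.2 - τ) 0
        ≤ ∑ c ∈ range n ×ˢ range n, max (cM p q c.1 c.2 - τ) 0 :=
      Finset.sum_le_sum_of_subset_of_nonneg hsub (fun c _ _ => le_max_right _ _)
    have h2 : ∑ c ∈ S, (cM p q c.1 c.2 - τ)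
        ≤ ∑ c ∈ range r ×ˢ range r, max (cM p q c.1 c.2 - τ) 0 := by
      calc ∑ c ∈ S, (cM p q c.1 c.2 - τ) ≤ ∑ c ∈ S, max (cM p q c.1 c.2 - τ) 0 :=
            Finset.sum_le_sum (fun c _ => le_max_left _ _)
        _ ≤ _ := Finset.sum_le_sum_of_subset_of_nonneg (Finset.filter_subset _ _)
            (fun c _ _ => le_max_right _ _)
    have h3 : ∑ c ∈ S, cM p q c.1 c.2 = ∑ c ∈ range r ×ˢ range r, cM p q c.1 c.2 :=
      Finset.sum_filter_of_ne (fun c _ hne => lt_of_le_of_ne (cM_nonneg _ _) (Ne.symm hne))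
    have h4 : ∑ c ∈ S, (cM p q c.1 c.2 - τ)
        = ∑ c ∈ range r ×ˢ range r, cM p q c.1 c.2 - S.card * τ := by
      rw [Finset.sum_sub_distrib, h3, Finset.sum_const, nsmul_eq_mul]
    have h5 : (S.card : ℝ) ≤ 2*r - 1 := by
      have := support_card hp hq hr1
      have hcast : ((2*r - 1 : ℕ) : ℝ) = 2*(r:ℝ) - 1 := by
        push_cast [Nat.cast_sub (by omega : 1 ≤ 2*r)]
        ring
      calc (S.card : ℝ) ≤ ((2*r - 1 : ℕ) : ℝ) := Nat.cast_le.2 this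
        _ = 2*(r:ℝ) - 1 := hcast
    have hblock : ∑ c ∈ range r ×ˢ range r, cM p q c.1 c.2 = min (PF p r) (PF q r) := by
      rw [Finset.sum_product]
      exact cM_block hp hq r
    have hcard : (S.card : ℝ) * τ ≤ (2*r - 1) * τ := mul_le_mul_of_nonneg_right h5 hτ
    calc min (PF p r) (PF q r) - 2*r*τ
        ≤ min (PF p r) (PF q r) - (2*r - 1)*τ := by linarith
      _ ≤ min (PF p r) (PF q r) - (S.card : ℝ)*τ := by linarith
      _ = ∑ c ∈ S, (cM p q c.1 c.2 - τ) := by rw [h4, hblock]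
      _ ≤ _ := le_trans h2 h1

lemma meet_def' (k : ℕ) : meet p q k = min (PF p (k+1)) (PF q (k+1)) - min (PF p k) (PF q k) := rfl

lemma z_nonneg (hp : IsProbVec n p) (hq : IsProbVec n q) (k : ℕ) : 0 ≤ meet p q k := by
  rw [meet_def']
  have := min_le_min (PF_mono hp (Nat.le_succ k)) (PF_mono hq (Nat.le_succ k))
  linarith

lemma z_le_one (hp : IsProbVec n p) (hq : IsProbVec n q) (k : ℕ) : meet p q k ≤ 1 := by
  rw [meet_def']
  have h1 := min_le_left (PF p (k+1)) (PF q (k+1))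
  have h2 := PF_le_one hp (k+1)
  have h3 : (0:ℝ) ≤ min (PF p k) (PF q k) := le_min (PF_nonneg hp k) (PF_nonneg hq k)
  linarith

lemma z_anti (hp : IsProbVec n p) (hq : IsProbVec n q) : Antitone (meet p q) := by
  apply antitone_nat_of_succ_le
  intro k
  rw [meet_def', meet_def']
  have cp : PF p (k+2) + PF p k ≤ 2 * PF p (k+1) := by
    rw [PF_succ (k+1), PF_succ k]
    have := hp.2.1 k (k+1) (Nat.le_succ k)
    linarith
  have cq : PF q (k+2) + PF q k ≤ 2 * PF q (k+1) := by
    rw [PF_succ (k+1), PF_succ k]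
    have := hq.2.1 k (k+1) (Nat.le_succ k)
    linarith
  rcases le_total (PF p (k+1)) (PF q (k+1)) with h|h
  · rw [min_eq_left h]
    have h1 := min_le_left (PF p (k+2)) (PF q (k+2))
    have h2 := min_le_left (PF p k) (PF q k)
    linarith
  · rw [min_eq_right h]
    have h1 := min_le_right (PF p (k+2)) (PF q (k+2))
    have h2 := min_le_right (PF p k) (PF q k)
    linarith

lemma z_sum (r : ℕ) : ∑ k ∈ range r, meet p q k = min (PF p r) (PF q r) := by
  rw [Finset.sum_congr rfl (fun k _ => meet_def' k),
    Finset.sum_range_sub (fun k => min (PF p k) (PF q k))]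
  rw [PF_zero, PF_zero, min_self, sub_zero]

/-- The level sets of `meet` are initial segments. -/
lemma z_cut (hp : IsProbVec n p) (hq : IsProbVec n q) (θ : ℝ) :
    ∃ r ≤ n, ∑ k ∈ range n, max (meet p q k - θ) 0
      = min (PF p r) (PF q r) - r * θ := by
  classical
  set S := (range n).filter (fun k => θ < meet p q k) with hSdef
  set r := S.card with hrdef
  have hrn : r ≤ n := le_trans (Finset.card_filter_le _ _) (by simp)
  refine ⟨r, hrn, ?_⟩
  have hiff : ∀ k < n, (θ < meet p q k ↔ k < r) := by
    intro k hk
    constructor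
    · intro hzk
      have hsub : range (k+1) ⊆ S := by
        intro l hl
        rw [Finset.mem_range] at hl
        rw [hSdef, Finset.mem_filter, Finset.mem_range]
        exact ⟨by omega, lt_of_lt_of_le hzk (z_anti hp hq (by omega))⟩
      have := Finset.card_le_card hsub
      simpa using this
    · intro hkr
      by_contra hc
      push_neg at hc
      have hsub : S ⊆ range k := by
        intro l hl
        rw [hSdef, Finset.mem_filter, Finset.mem_range] at hl
        rw [Finset.mem_range]
        by_contra hlk
        push_neg at hlk
        exact absurd (lt_of_lt_of_le hl.2 (z_anti hp hq hlk)) (not_lt.2 hc)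
      have := Finset.card_le_card hsub
      simp only [Finset.card_range] at this
      omega
  have e1 : ∀ k ∈ range n, max (meet p q k - θ) 0
      = if k < r then meet p q k - θ else 0 := by
    intro k hk
    rw [Finset.mem_range] at hk
    split_ifs with h
    · exact max_eq_left (by linarith [(hiff k hk).2 h])
    · have : ¬ θ < meet p q k := fun hc => h ((hiff k hk).1 hc)
      push_neg at this
      exact max_eq_right (by linarith)
  rw [Finset.sum_congr rfl e1]
  rw [Finset.range_eq_Ico, ← Finset.sum_Ico_consecutive _ (Nat.zero_le r) hrn]
  have e2 : ∑ k ∈ Finset.Ico r n, (if k < r then meet p q k - θ else 0) = 0 := by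
    apply Finset.sum_eq_zero
    intro k hk
    rw [Finset.mem_Ico] at hk
    rw [if_neg (by omega)]
  have e3 : ∑ k ∈ Finset.Ico 0 r, (if k < r then meet p q k - θ else 0)
      = ∑ k ∈ range r, (meet p q k - θ) := by
    rw [← Finset.range_eq_Ico]
    apply Finset.sum_congr rfl
    intro k hk
    rw [Finset.mem_range] at hk
    rw [if_pos hk]
  rw [e2, e3, add_zero, Finset.sum_sub_distrib, z_sum, Finset.sum_const, nsmul_eq_mul]
  simp

lemma sorted_subset_sum (hp : IsProbVec n p) (R : Finset ℕ) :
    ∑ i ∈ R, p i ≤ ∑ k ∈ range R.card, p k := by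
  classical
  set K := R.card with hK
  set A := R \ range K with hA
  set B := range K \ R with hB
  have hcard : A.card = B.card := by
    have h1 := Finset.card_sdiff_add_card_inter R (range K)
    have h2 := Finset.card_sdiff_add_card_inter (range K) R
    rw [Finset.inter_comm (range K) R] at h2
    simp only [Finset.card_range] at h2
    rw [hA, hB]
    omega
  have hsplit1 : ∑ i ∈ R, p i = ∑ i ∈ R ∩ range K, p i + ∑ i ∈ A, p i := by
    rw [hA, Finset.sum_inter_add_sum_sdiff]
  have hsplit2 : ∑ k ∈ range K, p k = ∑ i ∈ R ∩ range K, p i + ∑ i ∈ B, p i := by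
    rw [Finset.inter_comm, hB, Finset.sum_inter_add_sum_sdiff]
  have hAle : ∑ i ∈ A, p i ≤ A.card • p K := by
    apply Finset.sum_le_card_nsmul
    intro i hi
    rw [hA, Finset.mem_sdiff, Finset.mem_range] at hi
    exact hp.2.1 K i (by omega)
  have hBge : B.card • p K ≤ ∑ i ∈ B, p i := by
    apply Finset.card_nsmul_le_sum
    intro i hi
    rw [hB, Finset.mem_sdiff, Finset.mem_range] at hi
    exact hp.2.1 i K (by omega)
  rw [hcard] at hAle
  linarith [hsplit1, hsplit2, hAle, hBge]

lemma coupling_subset (hp : IsProbVec n p) (hq : IsProbVec n q) {N : ℕ → ℕ → ℝ}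
    (hN0 : ∀ i j, 0 ≤ N i j)
    (hNr : ∀ i < n, ∑ j ∈ Finset.range n, N i j = p i)
    (hNc : ∀ j < n, ∑ i ∈ Finset.range n, N i j = q j)
    {S : Finset (ℕ × ℕ)} (hS : S ⊆ range n ×ˢ range n) :
    ∑ c ∈ S, N c.1 c.2 ≤ min (PF p S.card) (PF q S.card) := by
  classical
  apply le_min
  · set R := S.image Prod.fst with hR
    have hsub : S ⊆ R ×ˢ range n := by
      intro c hc
      rw [Finset.mem_product]
      refine ⟨Finset.mem_image_of_mem _ hc, ?_⟩
      exact (Finset.mem_product.1 (hS hc)).2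
    calc ∑ c ∈ S, N c.1 c.2 ≤ ∑ c ∈ R ×ˢ range n, N c.1 c.2 :=
          Finset.sum_le_sum_of_subset_of_nonneg hsub (fun c _ _ => hN0 c.1 c.2)
      _ = ∑ i ∈ R, ∑ j ∈ range n, N i j := Finset.sum_product _ _ _
      _ = ∑ i ∈ R, p i := by
          apply Finset.sum_congr rfl
          intro i hi
          have : i ∈ range n := by
            rw [hR] at hi
            rcases Finset.mem_image.1 hi with ⟨c, hc, rfl⟩
            exact (Finset.mem_product.1 (hS hc)).1
          exact hNr i (Finset.mem_range.1 this)
      _ ≤ ∑ k ∈ range R.card, p k := sorted_subset_sum hp R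
      _ ≤ ∑ k ∈ range S.card, p k := Finset.sum_le_sum_of_subset_of_nonneg
          (Finset.range_subset_range.2 (Finset.card_image_le)) (fun k _ _ => hp.1 k)
      _ = PF p S.card := rfl
  · set R := S.image Prod.snd with hR
    have hsub : S ⊆ range n ×ˢ R := by
      intro c hc
      rw [Finset.mem_product]
      exact ⟨(Finset.mem_product.1 (hS hc)).1, Finset.mem_image_of_mem _ hc⟩
    calc ∑ c ∈ S, N c.1 c.2 ≤ ∑ c ∈ range n ×ˢ R, N c.1 c.2 :=
          Finset.sum_le_sum_of_subset_of_nonneg hsub (fun c _ _ => hN0 c.1 c.2)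
      _ = ∑ j ∈ R, ∑ i ∈ range n, N i j := Finset.sum_product_right _ _ _
      _ = ∑ j ∈ R, q j := by
          apply Finset.sum_congr rfl
          intro j hj
          have : j ∈ range n := by
            rw [hR] at hj
            rcases Finset.mem_image.1 hj with ⟨c, hc, rfl⟩
            exact (Finset.mem_product.1 (hS hc)).2
          exact hNc j (Finset.mem_range.1 this)
      _ ≤ ∑ k ∈ range R.card, q k := sorted_subset_sum hq R
      _ ≤ ∑ k ∈ range S.card, q k := Finset.sum_le_sum_of_subset_of_nonneg
          (Finset.range_subset_range.2 (Finset.card_image_le)) (fun k _ _ => hq.1 k)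
      _ = PF q S.card := rfl

/-- Any coupling's entries are sub-majorized by the meet, in `(· - τ)⁺` form. -/
lemma N_dom (hp : IsProbVec n p) (hq : IsProbVec n q) {N : ℕ → ℕ → ℝ}
    (hN0 : ∀ i j, 0 ≤ N i j)
    (hNr : ∀ i < n, ∑ j ∈ Finset.range n, N i j = p i)
    (hNc : ∀ j < n, ∑ i ∈ Finset.range n, N i j = q j)
    {τ : ℝ} (hτ : 0 ≤ τ) :
    ∑ c ∈ range n ×ˢ range n, max (N c.1 c.2 - τ) 0
      ≤ ∑ k ∈ range n, max (meet p q k - τ) 0 := by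
  classical
  set S := (range n ×ˢ range n).filter (fun c => τ < N c.1 c.2) with hSdef
  set K := S.card with hK
  have hLHS : ∑ c ∈ range n ×ˢ range n, max (N c.1 c.2 - τ) 0
      = ∑ c ∈ S, (N c.1 c.2 - τ) := by
    rw [hSdef, Finset.sum_filter]
    apply Finset.sum_congr rfl
    intro c _
    split_ifs with h
    · exact max_eq_left (by linarith)
    · push_neg at h
      exact max_eq_right (by linarith)
  set m := min K n with hm
  have hmn : m ≤ n := min_le_right _ _
  have hPm : min (PF p m) (PF q m) = min (PF p K) (PF q K) := by
    rcases le_total K n with h|h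
    · rw [hm, min_eq_left h]
    · rw [hm, min_eq_right h, PF_eq_one hp h, PF_eq_one hq h,
        PF_eq_one hp (le_refl n), PF_eq_one hq (le_refl n)]
  have hSN : ∑ c ∈ S, N c.1 c.2 ≤ min (PF p K) (PF q K) :=
    coupling_subset hp hq hN0 hNr hNc (Finset.filter_subset _ _)
  have hRHS : ∑ k ∈ range m, (meet p q k - τ)
      ≤ ∑ k ∈ range n, max (meet p q k - τ) 0 := by
    calc ∑ k ∈ range m, (meet p q k - τ) ≤ ∑ k ∈ range m, max (meet p q k - τ) 0 :=
          Finset.sum_le_sum (fun k _ => le_max_left _ _)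
      _ ≤ _ := Finset.sum_le_sum_of_subset_of_nonneg (Finset.range_subset_range.2 hmn)
          (fun k _ _ => le_max_right _ _)
  have hzsum : ∑ k ∈ range m, (meet p q k - τ) = min (PF p m) (PF q m) - m * τ := by
    rw [Finset.sum_sub_distrib, z_sum, Finset.sum_const, nsmul_eq_mul]
    simp
  have hmK : (m:ℝ) * τ ≤ K * τ := by
    apply mul_le_mul_of_nonneg_right _ hτ
    exact_mod_cast min_le_left K n
  rw [hLHS, Finset.sum_sub_distrib, Finset.sum_const, nsmul_eq_mul]
  calc ∑ c ∈ S, N c.1 c.2 - (K:ℝ) * τ ≤ min (PF p K) (PF q K) - K * τ := by linarith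
    _ ≤ min (PF p m) (PF q m) - m * τ := by rw [hPm]; linarith
    _ = ∑ k ∈ range m, (meet p q k - τ) := hzsum.symm
    _ ≤ _ := hRHS

lemma dbl (g : ℕ → ℝ) (m : ℕ) : ∑ l ∈ range (2*m), g (l/2) = ∑ k ∈ range m, (g k + g k) := by
  induction m with
  | zero => simp
  | succ m ih =>
    have h2 : 2*(m+1) = (2*m)+1+1 := by ring
    rw [h2, Finset.sum_range_succ, Finset.sum_range_succ, ih, Finset.sum_range_succ]
    have e1 : (2*m)/2 = m := by omega
    have e2 : (2*m+1)/2 = m := by omega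
    rw [e1, e2]
    ring

end main

lemma entropy_conv (n m : ℕ) (M : ℕ → ℕ → ℝ) :
    (∑ i ∈ Finset.range n, ∑ j ∈ Finset.range m, -(M i j * Real.logb 2 (M i j)))
    = -(∑ c ∈ range n ×ˢ range m, M c.1 c.2 * Real.log (M c.1 c.2)) / Real.log 2 := by
  have key : ∀ x : ℝ, -(x * Real.logb 2 x) = -(x * Real.log x) / Real.log 2 := by
    intro x; rw [Real.logb]; ring
  calc ∑ i ∈ range n, ∑ j ∈ range m, -(M i j * Real.logb 2 (M i j))
      = ∑ i ∈ range n, ∑ j ∈ range m, -(M i j * Real.log (M i j)) / Real.log 2 := by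
        refine sum_congr rfl (fun i _ => sum_congr rfl (fun j _ => key _))
    _ = (∑ i ∈ range n, ∑ j ∈ range m, -(M i j * Real.log (M i j))) / Real.log 2 := by
        rw [Finset.sum_div]
        exact sum_congr rfl (fun i _ => (Finset.sum_div _ _ _).symm)
    _ = (-(∑ i ∈ range n, ∑ j ∈ range m, M i j * Real.log (M i j))) / Real.log 2 := by
        congr 1
        rw [← Finset.sum_neg_distrib]
        exact sum_congr rfl (fun i _ => Finset.sum_neg_distrib _)
    _ = -(∑ c ∈ range n ×ˢ range m, M c.1 c.2 * Real.log (M c.1 c.2)) / Real.log 2 := by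
        rw [Finset.sum_product (f := fun c : ℕ × ℕ => M c.1 c.2 * Real.log (M c.1 c.2))]

lemma entropy_conv1 (n : ℕ) (z : ℕ → ℝ) :
    (∑ k ∈ Finset.range n, -(z k * Real.logb 2 (z k)))
    = -(∑ k ∈ range n, z k * Real.log (z k)) / Real.log 2 := by
  have key : ∀ x : ℝ, -(x * Real.logb 2 x) = -(x * Real.log x) / Real.log 2 := by
    intro x; rw [Real.logb]; ring
  rw [sum_congr rfl (fun k _ => key (z k)), ← Finset.sum_div, ← Finset.sum_neg_distrib]


theorem stmt9 (n : ℕ) (p q : ℕ → ℝ) (hp : IsProbVec n p) (hq : IsProbVec n q) :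
    ∃ M : ℕ → ℕ → ℝ, IsCoupling n n p q M ∧ Hmat n n M ≤ H2 n (meet p q) + 1 ∧
      ∀ N : ℕ → ℕ → ℝ, IsCoupling n n p q N → Hmat n n M ≤ Hmat n n N + 1 := by
  classical
  have hlog2 : (0:ℝ) < Real.log 2 := Real.log_pos one_lt_two
  have hlog2' : Real.log 2 ≠ 0 := ne_of_gt hlog2
  have hHmat : ∀ M : ℕ → ℕ → ℝ, Hmat n n M
      = -(∑ c ∈ range n ×ˢ range n, M c.1 c.2 * Real.log (M c.1 c.2)) / Real.log 2 :=
    fun M => entropy_conv n n M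
  have hH2 : H2 n (meet p q)
      = -(∑ k ∈ range n, meet p q k * Real.log (meet p q k)) / Real.log 2 :=
    entropy_conv1 n _
  have hmain : Hmat n n (fun i j => cM p q i j) ≤ H2 n (meet p q) + 1 := by
    have hone : min (PF p n) (PF q n) = 1 := by
      rw [PF_eq_one hp le_rfl, PF_eq_one hq le_rfl, min_self]
    have hzsum1 : ∑ k ∈ range n, meet p q k = 1 := by rw [z_sum, hone]
    have hMsum : ∑ c ∈ range n ×ˢ range n, cM p q c.1 c.2 = 1 := by
      rw [Finset.sum_product (f := fun c : ℕ × ℕ => cM p q c.1 c.2)]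
      rw [cM_block hp hq n, hone]
    have hysum : ∑ l ∈ range (2*n), meet p q (l/2) / 2 = 1 := by
      rw [dbl (fun k => meet p q k / 2) n]
      rw [Finset.sum_congr rfl (fun k _ => by ring :
        ∀ k ∈ range n, meet p q k / 2 + meet p q k / 2 = meet p q k)]
      exact hzsum1
    have happ1 : ∑ l ∈ range (2*n), (meet p q (l/2)/2) * Real.log (meet p q (l/2)/2)
        ≤ ∑ c ∈ range n ×ˢ range n, cM p q c.1 c.2 * Real.log (cM p q c.1 c.2) := by
      apply sum_mul_log_ge (x := fun c : ℕ × ℕ => cM p q c.1 c.2)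
        (y := fun l => meet p q (l/2)/2)
      · exact fun c _ => cM_nonneg c.1 c.2
      · exact fun c _ => cM_le_one hp hq c.1 c.2
      · intro l _
        have := z_nonneg hp hq (l/2); linarith
      · intro l _
        have := z_le_one hp hq (l/2); linarith
      · rw [hMsum, hysum]
      · intro τ hτ0 hτ1
        rw [dbl (fun k => max (meet p q k / 2 - τ) 0) n]
        have hterm : ∀ k ∈ range n,
            (max (meet p q k/2 - τ) 0 + max (meet p q k/2 - τ) 0)
              = max (meet p q k - 2*τ) 0 := by
          intro k _
          rcases le_total (meet p q k) (2*τ) with h|h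
          · rw [max_eq_right (by linarith), max_eq_right (by linarith)]; ring
          · rw [max_eq_left (by linarith), max_eq_left (by linarith)]; ring
        rw [Finset.sum_congr rfl hterm]
        obtain ⟨r, hrn, hval⟩ := z_cut hp hq (2*τ)
        rw [hval]
        calc min (PF p r) (PF q r) - r*(2*τ)
            = min (PF p r) (PF q r) - 2*r*τ := by ring
          _ ≤ _ := star hp hq (le_of_lt hτ0) hrn
    have hyln : ∑ l ∈ range (2*n), (meet p q (l/2)/2) * Real.log (meet p q (l/2)/2)
        = (∑ k ∈ range n, meet p q k * Real.log (meet p q k)) - Real.log 2 := by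
      rw [dbl (fun k => (meet p q k/2) * Real.log (meet p q k/2)) n]
      have hterm : ∀ k ∈ range n,
          ((meet p q k/2) * Real.log (meet p q k/2) + (meet p q k/2) * Real.log (meet p q k/2))
            = meet p q k * Real.log (meet p q k) - meet p q k * Real.log 2 := by
        intro k _
        rcases eq_or_lt_of_le (z_nonneg hp hq k) with h|h
        · rw [← h]; simp
        · rw [Real.log_div (ne_of_gt h) two_ne_zero]; ring
      rw [Finset.sum_congr rfl hterm, Finset.sum_sub_distrib, ← Finset.sum_mul, hzsum1,
        one_mul]
    have hineq1 : (∑ k ∈ range n, meet p q k * Real.log (meet p q k)) - Real.log 2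
        ≤ ∑ c ∈ range n ×ˢ range n, cM p q c.1 c.2 * Real.log (cM p q c.1 c.2) := by
      rw [← hyln]; exact happ1
    rw [hHmat, hH2]
    rw [div_add' _ _ _ hlog2', div_le_div_iff_of_pos_right hlog2]
    linarith
  refine ⟨fun i j => cM p q i j, ⟨fun i j => cM_nonneg i j,
    fun i hi => cM_row hp hq hi, fun j hj => cM_col hp hq hj⟩, hmain, ?_⟩
  intro N hN
  have hNsum : ∑ c ∈ range n ×ˢ range n, N c.1 c.2 = 1 := by
    rw [Finset.sum_product (f := fun c : ℕ × ℕ => N c.1 c.2)]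
    rw [Finset.sum_congr rfl (fun i hi => hN.2.1 i (Finset.mem_range.1 hi))]
    exact hp.2.2.1
  have happ2 : ∑ c ∈ range n ×ˢ range n, N c.1 c.2 * Real.log (N c.1 c.2)
    ≤ ∑ k ∈ range n, meet p q k * Real.log (meet p q k) := by
    apply sum_mul_log_ge (x := fun k => meet p q k) (y := fun c : ℕ × ℕ => N c.1 c.2)
    · exact fun k _ => z_nonneg hp hq k
    · exact fun k _ => z_le_one hp hq k
    · exact fun c _ => hN.1 c.1 c.2
    · intro c hc
      rw [Finset.mem_product, Finset.mem_range, Finset.mem_range] at hc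
      have h1 : N c.1 c.2 ≤ ∑ j ∈ range n, N c.1 j :=
        Finset.single_le_sum (fun j _ => hN.1 c.1 j) (Finset.mem_range.2 hc.2)
      rw [hN.2.1 c.1 hc.1] at h1
      have h2 : p c.1 ≤ ∑ k ∈ range n, p k :=
        Finset.single_le_sum (fun k _ => hp.1 k) (Finset.mem_range.2 hc.1)
      rw [hp.2.2.1] at h2
      linarith
    · rw [hNsum]
      have hone : min (PF p n) (PF q n) = 1 := by
        rw [PF_eq_one hp le_rfl, PF_eq_one hq le_rfl, min_self]
      rw [z_sum, hone]
    · intro τ hτ0 hτ1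
      exact N_dom hp hq hN.1 hN.2.1 hN.2.2 (le_of_lt hτ0)
  have hHN : H2 n (meet p q) ≤ Hmat n n N := by
    rw [hH2, hHmat N]
    rw [div_le_div_iff_of_pos_right hlog2]
    linarith
  linarith
end

section
/- Let M be any joint distribution (k-dimensional array) whose k one-dimensional marginals are the probability distributions p^(1),...,p^(k). Then H(M) ≥ H(p^(1) ∧ p^(2) ∧ ... ∧ p^(k)). -/
open Finset

/-!
Sort the entries of `M` non-increasingly into a vector `a`. Any `i` entries of `M` lie in at most
`i` fibres of the `j`-th coordinate projection, whose masses are entries of the sorted vector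
`p j`; hence every prefix sum of `a` is at most the corresponding prefix sum of each `p j`, and so
of their meet `b`, whose prefix sums are the minima. Then `H(b) ≤ H(a) = H(M)` by Schur-concavity:
bound `negMulLog (b i)` by the tangent line of `negMulLog` at `a i`, whose slopes `-log (a i) - 1`
increase with `i`, and sum by parts against the nonnegative prefix sums of `b - a`.
-/

lemma sum_range_meet_s14 (a b : ℕ → ℝ) (i : ℕ) :
    ∑ t ∈ range i, meet a b t = min (∑ t ∈ range i, a t) (∑ t ∈ range i, b t) := by
  simpa [meet] using sum_range_sub (fun t => min (∑ s ∈ range t, a s) (∑ s ∈ range t, b s)) i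

lemma meet_nonneg_s14 {a b : ℕ → ℝ} (ha : 0 ≤ a) (hb : 0 ≤ b) : 0 ≤ meet a b := fun t => by
  have hA : ∑ s ∈ range t, a s ≤ ∑ s ∈ range (t + 1), a s := by
    simpa [sum_range_succ] using ha t
  have hB : ∑ s ∈ range t, b s ≤ ∑ s ∈ range (t + 1), b s := by
    simpa [sum_range_succ] using hb t
  simpa [meet] using min_le_min hA hB

lemma bigMeet_nonneg {p : ℕ → ℕ → ℝ} {k : ℕ} (hp : ∀ j ≤ k, 0 ≤ p j) : 0 ≤ bigMeet p k := by
  induction k with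
  | zero => exact hp 0 le_rfl
  | succ k ih => exact meet_nonneg_s14 (ih fun j hj => hp j (by omega)) (hp (k + 1) le_rfl)

lemma le_sum_range_bigMeet {p : ℕ → ℕ → ℝ} {k i : ℕ} {x : ℝ}
    (h : ∀ j ≤ k, x ≤ ∑ t ∈ range i, p j t) : x ≤ ∑ t ∈ range i, bigMeet p k t := by
  induction k with
  | zero => exact h 0 le_rfl
  | succ k ih =>
    rw [bigMeet, sum_range_meet_s14]
    exact le_min (ih fun j hj => h j (by omega)) (h (k + 1) le_rfl)

lemma sum_range_bigMeet_le {p : ℕ → ℕ → ℝ} {k j : ℕ} (hj : j ≤ k) (i : ℕ) :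
    ∑ t ∈ range i, bigMeet p k t ≤ ∑ t ∈ range i, p j t := by
  induction k with
  | zero => obtain rfl : j = 0 := by omega
            rfl
  | succ k ih =>
    rw [bigMeet, sum_range_meet_s14]
    rcases hj.lt_or_eq with hj | rfl
    · exact (min_le_left _ _).trans (ih (by omega))
    · exact min_le_right _ _

lemma IsProbVec.sum_range_eq_one {n : ℕ} {q : ℕ → ℝ} (hq : IsProbVec n q) {i : ℕ} (hi : n ≤ i) :
    ∑ t ∈ range i, q t = 1 := by
  rw [← hq.2.2.1]
  exact (sum_subset (range_subset_range.2 hi) fun t _ ht => hq.2.2.2 t (by simpa using ht)).symm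

lemma sum_range_bigMeet_eq_one {p : ℕ → ℕ → ℝ} {k n : ℕ} (hp : ∀ j ≤ k, IsProbVec n (p j))
    {i : ℕ} (hi : n ≤ i) : ∑ t ∈ range i, bigMeet p k t = 1 :=
  le_antisymm ((sum_range_bigMeet_le k.zero_le i).trans_eq ((hp 0 k.zero_le).sum_range_eq_one hi))
    (le_sum_range_bigMeet fun j hj => ((hp j hj).sum_range_eq_one hi).ge)

lemma bigMeet_eq_zero {p : ℕ → ℕ → ℝ} {k n : ℕ} (hp : ∀ j ≤ k, IsProbVec n (p j))
    {t : ℕ} (ht : n ≤ t) : bigMeet p k t = 0 := by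
  rw [← sum_range_succ_sub_sum (bigMeet p k), sum_range_bigMeet_eq_one hp (by omega : n ≤ t + 1),
    sum_range_bigMeet_eq_one hp ht, sub_self]

lemma Real.negMulLog_le_tangent {a x : ℝ} (ha : 0 < a) (hx : 0 ≤ x) :
    Real.negMulLog x ≤ Real.negMulLog a + (-Real.log a - 1) * (x - a) := by
  rcases hx.eq_or_lt with rfl | hx
  · simp only [Real.negMulLog, Real.log_zero]
    nlinarith
  · have h : Real.log (a / x) ≤ a / x - 1 := Real.log_le_sub_one_of_pos (by positivity)
    rw [Real.log_div ha.ne' hx.ne'] at h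
    have h' : x * (Real.log a - Real.log x) ≤ a - x := by
      calc x * (Real.log a - Real.log x) ≤ x * (a / x - 1) := by gcongr
        _ = a - x := by field_simp
    simp only [Real.negMulLog]
    linarith

lemma sum_range_mul_le_of_monotoneOn {c d : ℕ → ℝ} {m : ℕ} (hc : MonotoneOn c (Set.Iio m))
    (hd : ∀ i < m, 0 ≤ ∑ t ∈ range i, d t) :
    ∑ i ∈ range m, c i * d i ≤ c (m - 1) * ∑ t ∈ range m, d t := by
  have h := sum_range_by_parts c d m
  simp only [smul_eq_mul] at h
  rw [h]
  refine sub_le_self _ (sum_nonneg fun i hi => mul_nonneg ?_ (hd _ ?_))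
  all_goals simp only [mem_range] at hi
  · exact sub_nonneg.2 (hc (by simp; omega) (by simp; omega) (by omega))
  · omega

lemma sum_negMulLog_le_of_pos {a b : ℕ → ℝ} {m : ℕ} (ha : AntitoneOn a (Set.Iio m))
    (ha_pos : ∀ i < m, 0 < a i) (hb : ∀ i < m, 0 ≤ b i)
    (hab : ∀ i < m, ∑ t ∈ range i, a t ≤ ∑ t ∈ range i, b t)
    (hm : ∑ t ∈ range m, a t = ∑ t ∈ range m, b t) :
    ∑ t ∈ range m, Real.negMulLog (b t) ≤ ∑ t ∈ range m, Real.negMulLog (a t) := by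
  set c : ℕ → ℝ := fun i => -Real.log (a i) - 1
  have hc : MonotoneOn c (Set.Iio m) := fun i hi j hj hij => by
    simpa [c] using Real.log_le_log (ha_pos j hj) (ha hi hj hij)
  have hd : ∀ i < m, 0 ≤ ∑ t ∈ range i, (b t - a t) := fun i hi => by
    simpa [sum_sub_distrib] using hab i hi
  calc ∑ t ∈ range m, Real.negMulLog (b t)
      ≤ ∑ t ∈ range m, (Real.negMulLog (a t) + c t * (b t - a t)) :=
        sum_le_sum fun t ht => Real.negMulLog_le_tangent (ha_pos t (by simpa using ht))
          (hb t (by simpa using ht))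
    _ ≤ ∑ t ∈ range m, Real.negMulLog (a t) + c (m - 1) * ∑ t ∈ range m, (b t - a t) := by
        rw [sum_add_distrib]
        gcongr
        exact sum_range_mul_le_of_monotoneOn hc hd
    _ = ∑ t ∈ range m, Real.negMulLog (a t) := by simp [sum_sub_distrib, hm]

/- Zero entries of `a` admit no tangent line, so they are peeled off from the end. -/
lemma sum_negMulLog_le_of_sum_range_le {a b : ℕ → ℝ} (ha : Antitone a) (ha₀ : 0 ≤ a)
    (hb : 0 ≤ b) (N : ℕ) (hab : ∀ i < N, ∑ t ∈ range i, a t ≤ ∑ t ∈ range i, b t)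
    (hN : ∑ t ∈ range N, a t = ∑ t ∈ range N, b t) :
    ∑ t ∈ range N, Real.negMulLog (b t) ≤ ∑ t ∈ range N, Real.negMulLog (a t) := by
  induction N with
  | zero => simp
  | succ N ih =>
    rcases (ha₀ N).lt_or_eq with hpos | hzero
    · exact sum_negMulLog_le_of_pos (ha.antitoneOn _)
        (fun i hi => hpos.trans_le (ha (by omega))) (fun i _ => hb i) hab hN
    · replace hzero : a N = 0 := hzero.symm
      rw [sum_range_succ, hzero, add_zero] at hN
      have hbN : b N = 0 := by
        have := hab N (by omega)
        rw [sum_range_succ] at hN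
        exact le_antisymm (by linarith) (hb N)
      rw [sum_range_succ, sum_range_succ, hzero, hbN, add_le_add_iff_right]
      refine ih (fun i hi => hab i (by omega)) ?_
      rw [hN, sum_range_succ, hbN, add_zero]

lemma Antitone.sum_le_sum_range_of_card_le {q : ℕ → ℝ} (hq : Antitone q) (hq₀ : 0 ≤ q)
    {U : Finset ℕ} {i : ℕ} (hU : #U ≤ i) : ∑ u ∈ U, q u ≤ ∑ t ∈ range i, q t := by
  have key : ∀ U : Finset ℕ, ∑ u ∈ U, q u ≤ ∑ t ∈ range #U, q t := by
    intro U
    induction U using Finset.induction_on_max with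
    | empty => simp
    | insert a s hlt ih =>
      have has : a ∉ s := fun h => lt_irrefl a (hlt a h)
      have hs : #s ≤ a := by
        simpa using card_le_card (fun x hx => mem_range.2 (hlt x hx) : s ⊆ range a)
      rw [sum_insert has, card_insert_of_notMem has, sum_range_succ, add_comm]
      exact add_le_add ih (hq hs)
  exact (key U).trans
    (sum_le_sum_of_subset_of_nonneg (range_subset_range.2 hU) fun t _ _ => hq₀ t)

section Marginal

variable {α : Type*} [Fintype α] {n : ℕ} {M : α → ℝ} {q : ℕ → ℝ}

lemma sum_eq_sum_range_of_marginal (π : α → Fin n)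
    (hmarg : ∀ t, ∑ f ∈ univ.filter (fun f => π f = t), M f = q t) :
    ∑ f, M f = ∑ t ∈ range n, q t := by
  rw [← sum_fiberwise univ π M, ← Fin.sum_univ_eq_sum_range]
  exact sum_congr rfl fun t _ => hmarg t

lemma sum_le_sum_range_of_marginal (hM : 0 ≤ M) (π : α → Fin n) (hq : Antitone q) (hq₀ : 0 ≤ q)
    (hmarg : ∀ t, ∑ f ∈ univ.filter (fun f => π f = t), M f = q t)
    {S : Finset α} {i : ℕ} (hS : #S ≤ i) : ∑ f ∈ S, M f ≤ ∑ t ∈ range i, q t :=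
  calc ∑ f ∈ S, M f = ∑ t ∈ S.image π, ∑ f ∈ S with π f = t, M f :=
        (sum_fiberwise_of_maps_to (fun f hf => mem_image_of_mem π hf) M).symm
    _ ≤ ∑ t ∈ S.image π, q t := sum_le_sum fun t _ => hmarg t ▸
        sum_le_sum_of_subset_of_nonneg (filter_subset_filter _ (subset_univ S)) fun f _ _ => hM f
    _ = ∑ u ∈ (S.image π).map Fin.valEmbedding, q u := (sum_map (S.image π) Fin.valEmbedding q).symm
    _ ≤ ∑ t ∈ range i, q t := hq.sum_le_sum_range_of_card_le hq₀ <| by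
        simpa using card_image_le.trans hS

end Marginal

lemma exists_antitone_rearrangement {α : Type*} [Fintype α] {M : α → ℝ} (hM : 0 ≤ M) :
    ∃ a : ℕ → ℝ, Antitone a ∧ 0 ≤ a ∧
      (∀ G : ℝ → ℝ, ∑ t ∈ range (Fintype.card α), G (a t) = ∑ f, G (M f)) ∧
      ∀ i, ∃ S : Finset α, #S ≤ i ∧ ∑ t ∈ range i, a t = ∑ f ∈ S, M f := by
  set N := Fintype.card α
  set e : Fin N ≃ α := (Tuple.sort fun x => -M ((Fintype.equivFin α).symm x)).trans
    (Fintype.equivFin α).symm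
  have he : Antitone (M ∘ e) := fun x y hxy => by
    have := Tuple.monotone_sort (fun x => -M ((Fintype.equivFin α).symm x)) hxy
    simp only [Function.comp_apply, neg_le_neg_iff] at this
    exact this
  set a : ℕ → ℝ := fun t => if h : t < N then M (e ⟨t, h⟩) else 0
  have ha₀ : 0 ≤ a := fun t => by
    by_cases h : t < N
    · simpa [a, h] using hM _
    · simp [a, h]
  refine ⟨a, fun i j hij => ?_, ha₀, fun G => ?_, fun i =>
    ⟨(univ.filter fun x : Fin N => x.val < i).map e.toEmbedding, ?_, ?_⟩⟩
  · by_cases hj : j < N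
    · simpa [a, hj, hij.trans_lt hj] using he (Fin.mk_le_mk.2 hij)
    · simpa [a, hj] using ha₀ i
  · rw [← Fin.sum_univ_eq_sum_range (fun t => G (a t)), ← e.sum_comp]
    simp [a]
  · rw [card_map, Fin.card_filter_val_lt]
    exact min_le_right _ _
  · have hsupp : ∀ t ∈ range i, a t ≠ 0 → t < N := fun t _ h => by
      by_contra hN
      simp [a, hN] at h
    rw [← sum_filter_of_ne hsupp, sum_map]
    calc ∑ t ∈ range i with t < N, a t
        = ∑ t ∈ (univ.filter fun x : Fin N => x.val < i).map Fin.valEmbedding, a t := by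
          congr 1
          ext t
          simp only [mem_filter, mem_range, mem_map, mem_univ, true_and, Fin.valEmbedding_apply]
          exact ⟨fun h => ⟨⟨t, h.2⟩, h.1, rfl⟩, by rintro ⟨x, hx, rfl⟩; exact ⟨hx, x.2⟩⟩
      _ = _ := by simp [sum_map, a]

lemma neg_mul_logb_two (x : ℝ) : -(x * Real.logb 2 x) = Real.negMulLog x / Real.log 2 := by
  rw [Real.negMulLog, Real.logb]
  ring

theorem stmt14 (k n : ℕ) (p : ℕ → ℕ → ℝ) (hp : ∀ j ≤ k, IsProbVec n (p j))
    (M : (Fin (k + 1) → Fin n) → ℝ) (hMnn : ∀ f, 0 ≤ M f)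
    (hmarg : ∀ (j : Fin (k + 1)) (t : Fin n),
      ∑ f ∈ Finset.univ.filter (fun f : Fin (k + 1) → Fin n => f j = t), M f =
        p j.val t.val) :
    H2 n (bigMeet p k) ≤ ∑ f : Fin (k + 1) → Fin n, -(M f * Real.logb 2 (M f)) := by
  obtain ⟨a, ha, ha₀, hsum, hprefix⟩ := exists_antitone_rearrangement hMnn
  set N := Fintype.card (Fin (k + 1) → Fin n)
  have hnN : n ≤ N := by simpa [N] using Nat.le_self_pow k.succ_ne_zero n
  have hab : ∀ i, ∑ t ∈ range i, a t ≤ ∑ t ∈ range i, bigMeet p k t := fun i => by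
    obtain ⟨S, hS, hSa⟩ := hprefix i
    exact le_sum_range_bigMeet fun j hj => hSa ▸ sum_le_sum_range_of_marginal hMnn
      (fun f => f ⟨j, by omega⟩) (fun _ _ h => (hp j hj).2.1 _ _ h) (hp j hj).1
      (hmarg ⟨j, by omega⟩) hS
  have htotal : ∑ t ∈ range N, a t = ∑ t ∈ range N, bigMeet p k t := by
    rw [show ∑ t ∈ range N, a t = ∑ f, M f from hsum id, sum_range_bigMeet_eq_one hp hnN,
      sum_eq_sum_range_of_marginal (fun f => f 0) (hmarg 0)]
    simpa using (hp 0 k.zero_le).2.2.1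
  have hH := sum_negMulLog_le_of_sum_range_le ha ha₀ (bigMeet_nonneg fun j hj => (hp j hj).1) N
    (fun i _ => hab i) htotal
  rw [hsum] at hH
  simp only [H2, neg_mul_logb_two, ← sum_div]
  gcongr
  rwa [sum_subset (range_subset_range.2 hnN) fun t _ ht => by
    simp [bigMeet_eq_zero hp (not_lt.1 (by simpa using ht))]]
end

section
/- Suppose the entries of a vector m can be partitioned into groups M_1,...,M_{|z|} with 1 ≤ |M_i| ≤ 2 and ∑_{x∈M_i} x = z_i for each i, where z is a probability vector. Then half(z) ⪯ m, i.e., half(z) is majorized by m. -/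
open Finset

/-!
Group the entries of `m` into the blocks `B j = {x | g x = j}`, each of size at most two and
summing to `z j`. The sum of the first `2t` entries of `half z` is `z 0 + ⋯ + z (t-1)`, the total
of the at most `2t` entries of `m` in the blocks `B 0, …, B (t-1)`; since `m` is sorted, any `c` of its entries
sum to at most its `c`-th prefix sum. For the odd prefix `2t + 1` add the largest entry of `B t`,
which is at least `z t / 2`.
-/

lemma sum_range_two_mul_half (z : ℕ → ℝ) (t : ℕ) :
    ∑ k ∈ range (2 * t), half z k = ∑ j ∈ range t, z j := by
  induction t with
  | zero => simp
  | succ t ih =>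
    rw [show 2 * (t + 1) = 2 * t + 1 + 1 by ring, sum_range_succ, sum_range_succ, ih,
      sum_range_succ]
    simp only [half, show (2 * t + 1) / 2 = t by omega, show 2 * t / 2 = t by omega]
    ring

lemma sum_range_two_mul_add_one_half (z : ℕ → ℝ) (t : ℕ) :
    ∑ k ∈ range (2 * t + 1), half z k = ∑ j ∈ range t, z j + z t / 2 := by
  rw [sum_range_succ, sum_range_two_mul_half]
  simp [half]

lemma sum_le_sum_range_card_of_antitone {m : ℕ → ℝ} (hm : Antitone m) (s : Finset ℕ) :
    ∑ k ∈ s, m k ≤ ∑ k ∈ range #s, m k := by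
  induction s using Finset.induction_on_max with
  | empty => simp
  | insert a s hlt ih =>
    have ha : a ∉ s := fun h => lt_irrefl a (hlt a h)
    have hcard : #s ≤ a := by
      simpa using card_le_card (fun x hx => mem_range.2 (hlt x hx) : s ⊆ range a)
    rw [sum_insert ha, card_insert_of_notMem ha, sum_range_succ, add_comm]
    exact add_le_add ih (hm hcard)

lemma sum_le_sum_range_of_card_le {m : ℕ → ℝ} (hm0 : 0 ≤ m) (hm : Antitone m)
    {s : Finset ℕ} {c : ℕ} (hs : #s ≤ c) :
    ∑ k ∈ s, m k ≤ ∑ k ∈ range c, m k :=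
  (sum_le_sum_range_card_of_antitone hm s).trans <|
    sum_le_sum_of_subset_of_nonneg (range_subset_range.2 hs) fun k _ _ => hm0 k

lemma exists_subset_card_le_one_sum_le_two_mul {ι : Type*} {f : ι → ℝ} (hf : 0 ≤ f)
    {s : Finset ι} (hs : #s ≤ 2) :
    ∃ u ⊆ s, #u ≤ 1 ∧ ∑ x ∈ s, f x ≤ 2 * ∑ x ∈ u, f x := by
  rcases s.eq_empty_or_nonempty with rfl | hne
  · exact ⟨∅, subset_rfl, by simp, by simp⟩
  obtain ⟨a, ha, hmax⟩ := exists_max_image s f hne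
  refine ⟨{a}, singleton_subset_iff.2 ha, by simp, ?_⟩
  calc ∑ x ∈ s, f x ≤ #s • f a := sum_le_card_nsmul s f (f a) hmax
    _ = #s * f a := nsmul_eq_mul _ _
    _ ≤ 2 * f a := mul_le_mul_of_nonneg_right (by exact_mod_cast hs) (hf a)
    _ = 2 * ∑ x ∈ {a}, f x := by rw [sum_singleton]

theorem maj_half_of_blocks {m z : ℕ → ℝ} (hm0 : 0 ≤ m) (hm : Antitone m)
    (s : Finset ℕ) (g : ℕ → ℕ) (hcard : ∀ j, #{x ∈ s | g x = j} ≤ 2)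
    (hsum : ∀ j, ∑ x ∈ s with g x = j, m x = z j) :
    Maj (half z) m := by
  have hfirst_card (t : ℕ) : #{x ∈ s | g x ∈ range t} ≤ 2 * t := by
    rw [← sum_card_fiberwise_eq_card_filter]
    simpa [mul_comm] using sum_le_sum fun j (_ : j ∈ range t) => hcard j
  have hfirst_sum (t : ℕ) : ∑ x ∈ s with g x ∈ range t, m x = ∑ j ∈ range t, z j := by
    rw [← sum_fiberwise_eq_sum_filter]
    exact sum_congr rfl fun j _ => hsum j
  intro i
  obtain ⟨t, rfl | rfl⟩ := Nat.even_or_odd' i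
  · rw [sum_range_two_mul_half, ← hfirst_sum]
    exact sum_le_sum_range_of_card_le hm0 hm (hfirst_card t)
  · obtain ⟨u, hus, hucard, hzu⟩ := exists_subset_card_le_one_sum_le_two_mul hm0 (hcard t)
    have hdisj : Disjoint {x ∈ s | g x ∈ range t} u := by
      refine disjoint_left.2 fun x hx hxu => ?_
      have hgx := (mem_filter.1 (hus hxu)).2
      simp [hgx] at hx
    rw [sum_range_two_mul_add_one_half, ← hfirst_sum, ← hsum t]
    calc _ ≤ ∑ x ∈ s with g x ∈ range t, m x + ∑ x ∈ u, m x := by linarith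
      _ = ∑ x ∈ {x ∈ s | g x ∈ range t} ∪ u, m x := (sum_union hdisj).symm
      _ ≤ _ := sum_le_sum_range_of_card_le hm0 hm <|
          (card_union_le _ _).trans (by linarith [hfirst_card t])

theorem stmt15_general (n N : ℕ) (z : ℕ → ℝ) (hz : IsProbVec n z)
    (m : ℕ → ℝ) (hmnn : ∀ i, 0 ≤ m i)
    (hsorted : ∀ i j : ℕ, i ≤ j → m j ≤ m i)
    (g : ℕ → ℕ) (hg : ∀ i < N, g i < n)
    (hfib : ∀ j < n, 1 ≤ ((Finset.range N).filter (fun i => g i = j)).card ∧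
      ((Finset.range N).filter (fun i => g i = j)).card ≤ 2)
    (hsum : ∀ j < n, ∑ i ∈ (Finset.range N).filter (fun i => g i = j), m i = z j) :
    Maj (half z) m := by
  have hempty (j : ℕ) (hj : n ≤ j) : (range N).filter (fun i => g i = j) = ∅ :=
    filter_eq_empty_iff.2 fun i hi => by have := hg i (mem_range.1 hi); omega
  refine maj_half_of_blocks hmnn hsorted (range N) g (fun j => ?_) (fun j => ?_)
  · rcases lt_or_ge j n with hj | hj
    · exact (hfib j hj).2
    · simp [hempty j hj]
  · rcases lt_or_ge j n with hj | hj
    · exact hsum j hj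
    · rw [hempty j hj, sum_empty, hz.2.2.2 j hj]

theorem stmt15 (n N : ℕ) (z : ℕ → ℝ) (hz : IsProbVec n z)
    (m : ℕ → ℝ) (hmnn : ∀ i, 0 ≤ m i) (hm0 : ∀ i, N ≤ i → m i = 0)
    (hsorted : ∀ i j : ℕ, i ≤ j → m j ≤ m i)
    (g : ℕ → ℕ) (hg : ∀ i < N, g i < n)
    (hfib : ∀ j < n, 1 ≤ ((Finset.range N).filter (fun i => g i = j)).card ∧
      ((Finset.range N).filter (fun i => g i = j)).card ≤ 2)
    (hsum : ∀ j < n, ∑ i ∈ (Finset.range N).filter (fun i => g i = j), m i = z j) :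
    Maj (half z) m :=
  stmt15_general n N z hz m hmnn hsorted g hg hfib hsum
end

section
/- If a coupling with entropy at most H(p ∧ q) + 1 can be constructed for any two probability distributions, then iterating pairwise along a balanced binary tree yields, for k = 2^κ distributions p^(1),...,p^(k), a joint distribution M with all k prescribed marginals satisfying H(M) ≤ H(p^(1) ∧ ... ∧ p^(k)) + log₂ k. -/
/-!
The joint distribution is built along a balanced binary tree. For two sorted distributions `a`,
`b` with cumulative sums `A`, `B`, the northwest-corner coupling (the overlaps of the quantile
intervals of `a` and `b`) has at most `2 s - 1` nonzero cells among its first `s` rows and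
columns, which carry mass `min (A s) (B s)`; so its decreasing rearrangement majorizes
`half (a ∧ b)`. Coupling the `2 ^ κ` distributions in pairs and recursing on the `2 ^ (κ - 1)`
sorted pair couplings, monotonicity of `∧` and `half` under majorization gives
`half^κ (p⁽¹⁾ ∧ ⋯ ∧ p⁽ᵏ⁾) ⪯ M`. Schur concavity of entropy and `H (half^κ x) = H x + κ` finish
the proof.
-/

open Finset

noncomputable def cumsum (p : ℕ → ℝ) (i : ℕ) : ℝ := ∑ k ∈ range i, p k

@[simp] lemma cumsum_zero (p : ℕ → ℝ) : cumsum p 0 = 0 := by simp [cumsum]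

lemma cumsum_succ (p : ℕ → ℝ) (i : ℕ) : cumsum p (i + 1) = cumsum p i + p i :=
  sum_range_succ p i

lemma cumsum_mono {p : ℕ → ℝ} (hp : ∀ i, 0 ≤ p i) : Monotone (cumsum p) := fun _ _ hij =>
  sum_le_sum_of_subset_of_nonneg (range_subset_range.2 hij) fun k _ _ => hp k

lemma cumsum_nonneg {p : ℕ → ℝ} (hp : ∀ i, 0 ≤ p i) (i : ℕ) : 0 ≤ cumsum p i :=
  sum_nonneg fun k _ => hp k

lemma Maj.trans {a b c : ℕ → ℝ} (hab : Maj a b) (hbc : Maj b c) : Maj a c :=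
  fun i => (hab i).trans (hbc i)

namespace IsProbVec

variable {n : ℕ} {p : ℕ → ℝ}

lemma nonneg (hp : IsProbVec n p) (i : ℕ) : 0 ≤ p i := hp.1 i

lemma antitone (hp : IsProbVec n p) : Antitone p := fun i j hij => hp.2.1 i j hij

lemma sum_range_eq_one_s16 (hp : IsProbVec n p) : ∑ k ∈ range n, p k = 1 := hp.2.2.1

lemma eq_zero (hp : IsProbVec n p) {i : ℕ} (hi : n ≤ i) : p i = 0 := hp.2.2.2 i hi

lemma cumsum_eq_one (hp : IsProbVec n p) {i : ℕ} (hi : n ≤ i) : cumsum p i = 1 := by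
  rw [cumsum, ← hp.sum_range_eq_one_s16]
  exact (sum_subset (range_subset_range.2 hi) fun k _ hk => hp.eq_zero (by simpa using hk)).symm

lemma sum_fin_eq_one (hp : IsProbVec n p) : ∑ t : Fin n, p t = 1 := by
  rw [Fin.sum_univ_eq_sum_range p n]; exact hp.sum_range_eq_one_s16

lemma cumsum_le_one (hp : IsProbVec n p) (i : ℕ) : cumsum p i ≤ 1 := by
  rcases le_total i n with h | h
  · exact (cumsum_mono hp.nonneg h).trans (hp.cumsum_eq_one le_rfl).le
  · exact (hp.cumsum_eq_one h).le

lemma cumsum_concave (hp : IsProbVec n p) (i : ℕ) :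
    cumsum p (i + 2) + cumsum p i ≤ 2 * cumsum p (i + 1) := by
  rw [cumsum_succ p (i + 1), cumsum_succ p i]
  linarith [hp.antitone (Nat.le_succ i)]

lemma of_antitone (h0 : Antitone p) (hz : ∀ i, n ≤ i → p i = 0)
    (hsum : ∑ k ∈ range n, p k = 1) : IsProbVec n p :=
  ⟨fun i => (hz (i + n) (by omega)) ▸ h0 (by omega), fun _ _ hij => h0 hij, hsum, hz⟩

end IsProbVec

lemma cumsum_meet (a b : ℕ → ℝ) (i : ℕ) :
    cumsum (meet a b) i = min (cumsum a i) (cumsum b i) := by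
  show ∑ k ∈ range i,
    (min (cumsum a (k + 1)) (cumsum b (k + 1)) - min (cumsum a k) (cumsum b k)) = _
  rw [sum_range_sub (fun j => min (cumsum a j) (cumsum b j)) i]
  simp

lemma Maj.meet {r a b : ℕ → ℝ} (ha : Maj r a) (hb : Maj r b) : Maj r (meet a b) := fun i => by
  rw [← cumsum, ← cumsum, cumsum_meet]
  exact le_min (ha i) (hb i)

lemma meet_maj_left (a b : ℕ → ℝ) : Maj (meet a b) a := fun i => by
  rw [← cumsum, cumsum_meet]
  exact min_le_left _ _

lemma meet_maj_right (a b : ℕ → ℝ) : Maj (meet a b) b := fun i => by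
  rw [← cumsum, cumsum_meet]
  exact min_le_right _ _

lemma min_add_min_le {A B : ℕ → ℝ} (hA : ∀ i, A (i + 2) + A i ≤ 2 * A (i + 1))
    (hB : ∀ i, B (i + 2) + B i ≤ 2 * B (i + 1)) (i : ℕ) :
    min (A (i + 2)) (B (i + 2)) + min (A i) (B i) ≤ 2 * min (A (i + 1)) (B (i + 1)) := by
  rcases le_total (A (i + 1)) (B (i + 1)) with h | h
  · linarith [hA i, min_le_left (A (i + 2)) (B (i + 2)), min_le_left (A i) (B i), min_eq_left h]
  · linarith [hB i, min_le_right (A (i + 2)) (B (i + 2)), min_le_right (A i) (B i), min_eq_right h]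

lemma isProbVec_meet {n : ℕ} {a b : ℕ → ℝ} (ha : IsProbVec n a) (hb : IsProbVec n b) :
    IsProbVec n (meet a b) := by
  have hinc : ∀ i, meet a b i = cumsum (meet a b) (i + 1) - cumsum (meet a b) i := fun i => by
    rw [cumsum_succ]; ring
  refine .of_antitone (antitone_nat_of_succ_le fun i => ?_) (fun i hi => ?_) ?_
  · have := min_add_min_le ha.cumsum_concave hb.cumsum_concave i
    rw [hinc, hinc, cumsum_meet, cumsum_meet, cumsum_meet]
    linarith
  · rw [hinc, cumsum_meet, cumsum_meet, ha.cumsum_eq_one hi, hb.cumsum_eq_one hi,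
      ha.cumsum_eq_one (by omega), hb.cumsum_eq_one (by omega), sub_self]
  · rw [← cumsum, cumsum_meet, ha.cumsum_eq_one le_rfl, hb.cumsum_eq_one le_rfl, min_self]

lemma isProbVec_bigMeet {n : ℕ} {p : ℕ → ℕ → ℝ} {k : ℕ} (hp : ∀ j ≤ k, IsProbVec n (p j)) :
    IsProbVec n (bigMeet p k) := by
  induction k with
  | zero => exact hp 0 le_rfl
  | succ k ih => exact isProbVec_meet (ih fun j hj => hp j (by omega)) (hp (k + 1) le_rfl)

lemma bigMeet_maj {p : ℕ → ℕ → ℝ} {j k : ℕ} (hj : j ≤ k) : Maj (bigMeet p k) (p j) := by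
  induction k with
  | zero =>
    obtain rfl : j = 0 := by omega
    exact fun _ => le_rfl
  | succ k ih =>
    rcases Nat.lt_or_ge j (k + 1) with h | h
    · exact (meet_maj_left _ _).trans (ih (by omega))
    · obtain rfl : j = k + 1 := by omega
      exact meet_maj_right _ _

lemma Maj.bigMeet {r : ℕ → ℝ} {p : ℕ → ℕ → ℝ} {k : ℕ} (h : ∀ j ≤ k, Maj r (p j)) :
    Maj r (bigMeet p k) := by
  induction k with
  | zero => exact h 0 le_rfl
  | succ k ih => exact (ih fun j hj => h j (by omega)).meet (h (k + 1) le_rfl)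

lemma half_two_mul (x : ℕ → ℝ) (i : ℕ) : half x (2 * i) = x i / 2 := by
  simp [half]

lemma half_two_mul_add_one (x : ℕ → ℝ) (i : ℕ) : half x (2 * i + 1) = x i / 2 := by
  simp [half, show (2 * i + 1) / 2 = i by omega]

lemma sum_range_two_mul (f : ℕ → ℝ) (N : ℕ) :
    ∑ k ∈ range (2 * N), f k = ∑ i ∈ range N, (f (2 * i) + f (2 * i + 1)) := by
  induction N with
  | zero => simp
  | succ N ih => rw [mul_add, mul_one, sum_range_succ, sum_range_succ, sum_range_succ, ih]; ring

lemma cumsum_half (x : ℕ → ℝ) (k : ℕ) :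
    cumsum (half x) k = (cumsum x (k / 2) + cumsum x ((k + 1) / 2)) / 2 := by
  induction k with
  | zero => simp
  | succ k ih =>
    rw [cumsum_succ, ih]
    obtain ⟨t, rfl | rfl⟩ := Nat.even_or_odd' k
    · rw [half_two_mul, show (2 * t + 1 + 1) / 2 = t + 1 by omega,
        show (2 * t + 1) / 2 = t by omega, show 2 * t / 2 = t by omega, cumsum_succ]
      ring
    · rw [half_two_mul_add_one, show (2 * t + 1 + 1 + 1) / 2 = t + 1 by omega,
        show (2 * t + 1 + 1) / 2 = t + 1 by omega, show (2 * t + 1) / 2 = t by omega, cumsum_succ]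
      ring

lemma Maj.half {x y : ℕ → ℝ} (h : Maj x y) : Maj (half x) (half y) := fun i => by
  have h₁ : cumsum x (i / 2) ≤ cumsum y (i / 2) := h _
  have h₂ : cumsum x ((i + 1) / 2) ≤ cumsum y ((i + 1) / 2) := h _
  rw [← cumsum, ← cumsum, cumsum_half, cumsum_half]
  linarith

lemma Maj.halfIter {x y : ℕ → ℝ} (h : Maj x y) (i : ℕ) : Maj (halfIter i x) (halfIter i y) := by
  induction i with
  | zero => exact h
  | succ i ih => exact ih.half

lemma halfIter_succ_eq (i : ℕ) (x : ℕ → ℝ) : halfIter (i + 1) x = halfIter i (half x) := by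
  induction i with
  | zero => rfl
  | succ i ih => exact congrArg half ih

lemma isProbVec_half {n : ℕ} {p : ℕ → ℝ} (hp : IsProbVec n p) : IsProbVec (2 * n) (half p) := by
  refine .of_antitone (fun i j hij => ?_) (fun i hi => ?_) ?_
  · exact div_le_div_of_nonneg_right (hp.antitone (Nat.div_le_div_right hij)) zero_le_two
  · simp [half, hp.eq_zero (show n ≤ i / 2 by omega)]
  · rw [sum_range_two_mul, ← hp.sum_range_eq_one_s16]
    exact sum_congr rfl fun i _ => by rw [half_two_mul, half_two_mul_add_one]; ring

lemma isProbVec_halfIter {n : ℕ} {p : ℕ → ℝ} (hp : IsProbVec n p) (i : ℕ) :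
    IsProbVec (2 ^ i * n) (halfIter i p) := by
  induction i with
  | zero => simpa [halfIter] using hp
  | succ i ih => simpa [halfIter, pow_succ, mul_comm, mul_left_comm] using isProbVec_half ih

lemma negMulLogb_half (u : ℝ) :
    -(u / 2 * Real.logb 2 (u / 2)) = -(u * Real.logb 2 u) / 2 + u / 2 := by
  rcases eq_or_ne u 0 with rfl | hu
  · simp
  · rw [Real.logb_div hu two_ne_zero, Real.logb_self_eq_one one_lt_two]
    ring

lemma H2_half {n : ℕ} {p : ℕ → ℝ} (hp : IsProbVec n p) :
    H2 (2 * n) (half p) = H2 n p + 1 := by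
  rw [H2, H2, sum_range_two_mul, ← hp.sum_range_eq_one_s16, ← sum_add_distrib]
  exact sum_congr rfl fun i _ => by
    rw [half_two_mul, half_two_mul_add_one, negMulLogb_half]; ring

lemma H2_halfIter {n : ℕ} {p : ℕ → ℝ} (hp : IsProbVec n p) (i : ℕ) :
    H2 (2 ^ i * n) (halfIter i p) = H2 n p + i := by
  induction i with
  | zero => simp [halfIter]
  | succ i ih =>
    rw [pow_succ, mul_comm _ 2, mul_assoc, halfIter, H2_half (isProbVec_halfIter hp i), ih]
    push_cast; ring

open Real in
lemma negMulLog_le_tangent {a b : ℝ} (ha : 0 < a) (hb : 0 ≤ b) :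
    negMulLog b ≤ negMulLog a + (-log a - 1) * (b - a) := by
  rcases hb.eq_or_lt with rfl | hb
  · simp [negMulLog]; linarith
  · have h := mul_le_mul_of_nonneg_left (log_le_sub_one_of_pos (div_pos ha hb)) hb.le
    rw [log_div ha.ne' hb.ne', mul_sub_one, mul_div_cancel₀ _ hb.ne'] at h
    simp only [negMulLog]
    nlinarith

lemma sum_mul_le_of_monotone {c d : ℕ → ℝ} {m : ℕ} (hc : ∀ k < m, c k ≤ c (k + 1))
    (hd : ∀ t ≤ m, 0 ≤ cumsum d t) :
    ∑ k ∈ range (m + 1), c k * d k ≤ c m * cumsum d (m + 1) := by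
  have := sum_range_by_parts c d (m + 1)
  simp only [smul_eq_mul, add_tsub_cancel_right] at this
  rw [this, cumsum]
  refine sub_le_self _ (sum_nonneg fun i hi => mul_nonneg ?_ (hd _ ?_))
  · linarith [hc i (mem_range.1 hi)]
  · linarith [mem_range.1 hi]

/-- Compare with the tangent lines of `negMulLog` at the entries of `x`, whose slopes increase,
and sum by parts. -/
lemma sum_negMulLog_le_of_maj_of_pos {x y : ℕ → ℝ} {K : ℕ} (hx : Antitone x)
    (hpos : ∀ k < K, 0 < x k) (hy : ∀ i, 0 ≤ y i) (hxy : Maj x y)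
    (hsum : cumsum x K = cumsum y K) :
    ∑ k ∈ range K, Real.negMulLog (y k) ≤ ∑ k ∈ range K, Real.negMulLog (x k) := by
  obtain _ | m := K
  · simp
  set c : ℕ → ℝ := fun k => -Real.log (x k) - 1
  have habel : ∑ k ∈ range (m + 1), c k * (y k - x k) ≤ 0 := by
    have hc : ∀ k < m, c k ≤ c (k + 1) := fun k hk => by
      have := Real.log_le_log (hpos (k + 1) (by omega)) (hx (Nat.le_succ k))
      simp only [c]; linarith
    have hd : ∀ t, 0 ≤ cumsum (fun k => y k - x k) t := fun t => by
      have : cumsum x t ≤ cumsum y t := hxy t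
      simp only [cumsum, sum_sub_distrib] at this ⊢; linarith
    have h0 : cumsum (fun k => y k - x k) (m + 1) = 0 := by
      simp only [cumsum, sum_sub_distrib] at hsum ⊢; linarith
    simpa [h0] using sum_mul_le_of_monotone hc fun t _ => hd t
  calc ∑ k ∈ range (m + 1), Real.negMulLog (y k)
      ≤ ∑ k ∈ range (m + 1), (Real.negMulLog (x k) + c k * (y k - x k)) :=
        sum_le_sum fun k hk => negMulLog_le_tangent (hpos k (mem_range.1 hk)) (hy k)
    _ ≤ ∑ k ∈ range (m + 1), Real.negMulLog (x k) := by
        rw [sum_add_distrib]; linarith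

lemma sum_negMulLog_le_of_maj {x y : ℕ → ℝ} {K : ℕ} (hx : Antitone x) (hx0 : ∀ i, 0 ≤ x i)
    (hy : ∀ i, 0 ≤ y i) (hxy : Maj x y) (hsum : cumsum x K = cumsum y K) :
    ∑ k ∈ range K, Real.negMulLog (y k) ≤ ∑ k ∈ range K, Real.negMulLog (x k) := by
  induction K with
  | zero => simp
  | succ K ih =>
    rcases (hx0 K).lt_or_eq with hK | hK
    · exact sum_negMulLog_le_of_maj_of_pos hx (fun k hk => hK.trans_le (hx (by omega))) hy hxy hsum
    -- `x K = 0`, hence `y K = 0` as well, and the claim reduces to `K`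
    have hyK : y K = 0 := by
      have : cumsum x K ≤ cumsum y K := hxy K
      rw [cumsum_succ, cumsum_succ, ← hK] at hsum
      linarith [hy K]
    rw [cumsum_succ, cumsum_succ, ← hK, hyK] at hsum
    rw [sum_range_succ, sum_range_succ, ← hK, hyK]
    simpa using ih (by simpa using hsum)

lemma H2_le_of_maj {x y : ℕ → ℝ} {K : ℕ} (hx : Antitone x) (hx0 : ∀ i, 0 ≤ x i)
    (hy : ∀ i, 0 ≤ y i) (hxy : Maj x y) (hsum : cumsum x K = cumsum y K) :
    H2 K y ≤ H2 K x := by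
  have hH2 : ∀ p : ℕ → ℝ, H2 K p = (∑ k ∈ range K, Real.negMulLog (p k)) / Real.log 2 :=
    fun p => by
      simp only [H2, Real.logb, Real.negMulLog, sum_div]
      exact sum_congr rfl fun k _ => by ring
  rw [hH2, hH2]
  exact div_le_div_of_nonneg_right (sum_negMulLog_le_of_maj hx hx0 hy hxy hsum)
    (Real.log_nonneg one_le_two)

lemma sum_le_cumsum_card {v : ℕ → ℝ} (hv : Antitone v) (S : Finset ℕ) :
    ∑ k ∈ S, v k ≤ cumsum v S.card := by
  induction S using Finset.induction_on_max with
  | empty => simp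
  | insert a s ha ih =>
    have has : a ∉ s := fun h => lt_irrefl a (ha a h)
    have hcard : s.card ≤ a := by
      simpa using card_le_card fun x hx => mem_range.2 (ha x hx)
    rw [sum_insert has, card_insert_of_notMem has, cumsum_succ]
    linarith [hv hcard]

lemma sum_le_cumsum {v : ℕ → ℝ} (hv : Antitone v) (hv0 : ∀ i, 0 ≤ v i) {S : Finset ℕ} {t : ℕ}
    (hS : S.card ≤ t) : ∑ k ∈ S, v k ≤ cumsum v t :=
  (sum_le_cumsum_card hv S).trans (cumsum_mono hv0 hS)

/-- `MajFn x w` says that `x` is majorized by the decreasing rearrangement of `w`,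
without sorting `w`. -/
def MajFn {ι : Type*} (x : ℕ → ℝ) (w : ι → ℝ) : Prop :=
  ∀ t, ∃ S : Finset ι, S.card ≤ t ∧ cumsum x t ≤ ∑ i ∈ S, w i

namespace MajFn

variable {ι κ : Type*} {x y : ℕ → ℝ} {w : κ → ℝ}

lemma refl (x : ℕ → ℝ) : MajFn x x := fun t => ⟨range t, by simp, le_rfl⟩

lemma of_maj (hxy : Maj x y) (h : MajFn y w) : MajFn x w := fun t => by
  obtain ⟨S, hS, hy⟩ := h t
  exact ⟨S, hS, (hxy t).trans hy⟩

lemma comp {e : ι → κ} (he : Function.Injective e) (hw : ∀ i, i ∉ Set.range e → w i = 0)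
    (h : MajFn x w) : MajFn x (w ∘ e) := fun t => by
  obtain ⟨S, hS, hx⟩ := h t
  refine ⟨S.preimage e he.injOn, ?_, ?_⟩
  · exact (card_le_card_of_injOn e (fun i hi => mem_preimage.1 hi) he.injOn).trans hS
  · rwa [Function.comp_def, sum_preimage e S he.injOn w fun i _ hi => hw i hi]

lemma comp_equiv (e : ι ≃ κ) (h : MajFn x w) : MajFn x (w ∘ e) :=
  h.comp e.injective fun i hi => absurd (e.surjective i) hi

lemma of_comp {e : ι → κ} (he : Function.Injective e) (h : MajFn x (w ∘ e)) : MajFn x w :=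
  fun t => by
    obtain ⟨S, hS, hx⟩ := h t
    refine ⟨S.map ⟨e, he⟩, by simpa using hS, ?_⟩
    rwa [sum_map]

lemma maj {v : ℕ → ℝ} (hv : Antitone v) (hv0 : ∀ i, 0 ≤ v i) (h : MajFn x v) : Maj x v :=
  fun t => by
    obtain ⟨S, hS, hx⟩ := h t
    exact hx.trans (sum_le_cumsum hv hv0 hS)

end MajFn

lemma sum_comp_eq_sum_range {ι : Type*} [Fintype ι] {w : ι → ℝ} {v : ℕ → ℝ}
    (g : ℝ → ℝ) (e : ι ≃ Fin (Fintype.card ι)) (he : ∀ i, v (e i) = w i) :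
    ∑ i, g (w i) = ∑ k ∈ range (Fintype.card ι), g (v k) := by
  rw [← Fin.sum_univ_eq_sum_range (fun k => g (v k)), ← e.sum_comp]
  simp [he]

lemma exists_antitone_rearrangement_s16 {ι : Type*} [Fintype ι] (w : ι → ℝ) (hw : ∀ i, 0 ≤ w i) :
    ∃ (v : ℕ → ℝ) (e : ι ≃ Fin (Fintype.card ι)), Antitone v ∧
      (∀ k, Fintype.card ι ≤ k → v k = 0) ∧ ∀ i, v (e i) = w i := by
  classical
  set N := Fintype.card ι
  set e₀ : Fin N ≃ ι := (Fintype.equivFin ι).symm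
  set σ := Tuple.sort fun k => -w (e₀ k)
  have hσ : Monotone ((fun k => -w (e₀ k)) ∘ σ) := Tuple.monotone_sort _
  refine ⟨fun k => if h : k < N then w (e₀ (σ ⟨k, h⟩)) else 0, e₀.symm.trans σ.symm,
    fun i j hij => ?_, fun k hk => by simp [Nat.not_lt.2 hk], fun i => by simp⟩
  by_cases hj : j < N
  · have hi : i < N := lt_of_le_of_lt hij hj
    simpa [hi, hj] using hσ (show (⟨i, hi⟩ : Fin N) ≤ ⟨j, hj⟩ from hij)
  · by_cases hi : i < N <;> simp [hi, hj, hw]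

lemma exists_isProbVec_rearrangement {ι : Type*} [Fintype ι] {w : ι → ℝ} (hw : ∀ i, 0 ≤ w i)
    (hw1 : ∑ i, w i = 1) :
    ∃ (v : ℕ → ℝ) (e : ι ≃ Fin (Fintype.card ι)), IsProbVec (Fintype.card ι) v ∧
      ∀ i, v (e i) = w i := by
  obtain ⟨v, e, hv, hvz, hve⟩ := exists_antitone_rearrangement_s16 w hw
  refine ⟨v, e, .of_antitone hv hvz ?_, hve⟩
  rw [← hw1]
  exact (sum_comp_eq_sum_range id e hve).symm

lemma MajFn.of_rearrangement {ι : Type*} [Fintype ι] {x v : ℕ → ℝ} {w : ι → ℝ}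
    (e : ι ≃ Fin (Fintype.card ι)) (hve : ∀ i, v (e i) = w i) (h : MajFn x w) : MajFn x v :=
  MajFn.of_comp (e := fun i => (e i : ℕ)) (Fin.val_injective.comp e.injective)
    (by simpa [Function.comp_def, hve] using h)

lemma H2_of_le {n K : ℕ} {p : ℕ → ℝ} (hp : IsProbVec n p) (hK : n ≤ K) : H2 K p = H2 n p :=
  (sum_subset (range_subset_range.2 hK) fun k _ hk => by
    simp [hp.eq_zero (not_lt.1 (mem_range.not.1 hk))]).symm

lemma entropy_le_of_majFn {ι : Type*} [Fintype ι] {m : ℕ} {x : ℕ → ℝ} (hx : IsProbVec m x)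
    {w : ι → ℝ} (hw : ∀ i, 0 ≤ w i) (hw1 : ∑ i, w i = 1) (h : MajFn x w) :
    ∑ i, -(w i * Real.logb 2 (w i)) ≤ H2 m x := by
  obtain ⟨v, e, hv, hve⟩ := exists_isProbVec_rearrangement hw hw1
  have hmaj : Maj x v := (h.of_rearrangement e hve).maj hv.antitone hv.nonneg
  calc ∑ i, -(w i * Real.logb 2 (w i))
      = H2 (m + Fintype.card ι) v := by
        rw [H2_of_le hv (by omega)]
        exact sum_comp_eq_sum_range (fun t => -(t * Real.logb 2 t)) e hve
    _ ≤ H2 (m + Fintype.card ι) x := H2_le_of_maj hx.antitone hx.nonneg hv.nonneg hmaj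
        (by rw [hx.cumsum_eq_one (by omega), hv.cumsum_eq_one (by omega)])
    _ = H2 m x := H2_of_le hx (by omega)

/-- The northwest-corner coupling: `nw a b i j` is the length of the overlap of the intervals
`[A i, A (i + 1)]` and `[B j, B (j + 1)]` cut out by the cumulative sums of `a` and `b`. -/
noncomputable def nw (a b : ℕ → ℝ) (i j : ℕ) : ℝ :=
  max 0 (min (cumsum a (i + 1)) (cumsum b (j + 1)) - max (cumsum a i) (cumsum b j))

section Northwest

variable {a b : ℕ → ℝ}

lemma nw_nonneg (a b : ℕ → ℝ) (i j : ℕ) : 0 ≤ nw a b i j := le_max_left _ _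

lemma nw_comm (a b : ℕ → ℝ) (i j : ℕ) : nw a b i j = nw b a j i := by
  rw [nw, nw, min_comm, max_comm (cumsum a i)]

lemma nw_eq_zero_of_left {i : ℕ} (hi : a i = 0) (j : ℕ) : nw a b i j = 0 := by
  have := (min_le_left (cumsum a i) (cumsum b (j + 1))).trans (le_max_left _ (cumsum b j))
  rw [nw, cumsum_succ, hi, add_zero]
  exact max_eq_left (by linarith)

/-- The overlap of `[A, A']` and `[B, B']` is what `[A, A'] ∩ [0, B']` has beyond
`[A, A'] ∩ [0, B]`. -/
lemma overlap_eq_sub {A A' B B' : ℝ} (hA : A ≤ A') (hB : B ≤ B') :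
    max 0 (min A' B' - max A B) = (min A' B' - min A B') - (min A' B - min A B) := by
  simp only [max_def, min_def]
  split_ifs <;> linarith

lemma sum_range_nw (ha : ∀ i, 0 ≤ a i) (hb : ∀ i, 0 ≤ b i) (i s : ℕ) :
    ∑ j ∈ range s, nw a b i j =
      min (cumsum a (i + 1)) (cumsum b s) - min (cumsum a i) (cumsum b s) := by
  have h := sum_range_sub
    (fun j => min (cumsum a (i + 1)) (cumsum b j) - min (cumsum a i) (cumsum b j)) s
  simp only [cumsum_zero, min_eq_right (cumsum_nonneg ha _), sub_self, sub_zero] at h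
  rw [← h]
  exact sum_congr rfl fun j _ =>
    overlap_eq_sub (cumsum_mono ha (Nat.le_succ i)) (cumsum_mono hb (Nat.le_succ j))

lemma sum_range_sum_range_nw (ha : ∀ i, 0 ≤ a i) (hb : ∀ i, 0 ≤ b i) (s : ℕ) :
    ∑ i ∈ range s, ∑ j ∈ range s, nw a b i j = min (cumsum a s) (cumsum b s) := by
  simp only [sum_range_nw ha hb]
  rw [sum_range_sub (fun i => min (cumsum a i) (cumsum b s)),
    cumsum_zero, min_eq_left (cumsum_nonneg hb s), sub_zero]

lemma sum_range_nw_row {n : ℕ} (ha : IsProbVec n a) (hb : IsProbVec n b) (i : ℕ) :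
    ∑ j ∈ range n, nw a b i j = a i := by
  rw [sum_range_nw ha.nonneg hb.nonneg, hb.cumsum_eq_one le_rfl,
    min_eq_left (ha.cumsum_le_one _), min_eq_left (ha.cumsum_le_one _), cumsum_succ]
  ring

lemma sum_range_nw_col {n : ℕ} (ha : IsProbVec n a) (hb : IsProbVec n b) (j : ℕ) :
    ∑ i ∈ range n, nw a b i j = b j := by
  simpa only [nw_comm a b] using sum_range_nw_row hb ha j

/-- Nonzero cells have disjoint nonempty interiors, so their left ends `max (A i) (B j)` are
distinct; they lie among the at most `2 s - 1` values `A i`, `B j` with `i, j < s` (both include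
`0`). -/
lemma card_nw_ne_zero_le (ha : ∀ i, 0 ≤ a i) (hb : ∀ i, 0 ≤ b i) (s : ℕ) :
    ((range s ×ˢ range s).filter fun ij => nw a b ij.1 ij.2 ≠ 0).card ≤ 2 * s - 1 := by
  classical
  rcases Nat.eq_zero_or_pos s with rfl | hs
  · simp
  set A := cumsum a
  set B := cumsum b
  set left : ℕ × ℕ → ℝ := fun ij => max (A ij.1) (B ij.2)
  have hlt : ∀ ij, nw a b ij.1 ij.2 ≠ 0 → left ij < min (A (ij.1 + 1)) (B (ij.2 + 1)) :=
    fun ij h => by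
      by_contra hle
      exact h (max_eq_left (by linarith [not_lt.1 hle]))
  have hlt₁ : ∀ u v, nw a b u.1 u.2 ≠ 0 → u.1 < v.1 → left u < left v := fun u v hu huv =>
    calc left u < A (u.1 + 1) := (hlt u hu).trans_le (min_le_left _ _)
      _ ≤ A v.1 := cumsum_mono ha huv
      _ ≤ left v := le_max_left _ _
  have hlt₂ : ∀ u v, nw a b u.1 u.2 ≠ 0 → u.2 < v.2 → left u < left v := fun u v hu huv =>
    calc left u < B (u.2 + 1) := (hlt u hu).trans_le (min_le_right _ _)
      _ ≤ B v.2 := cumsum_mono hb huv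
      _ ≤ left v := le_max_right _ _
  have hinj : Set.InjOn left ((range s ×ˢ range s).filter fun ij => nw a b ij.1 ij.2 ≠ 0) := by
    intro u hu v hv huv
    simp only [coe_filter, Set.mem_ofPred_eq] at hu hv
    ext
    · by_contra hne
      rcases lt_or_gt_of_ne hne with h | h
      · exact (hlt₁ u v hu.2 h).ne huv
      · exact (hlt₁ v u hv.2 h).ne huv.symm
    · by_contra hne
      rcases lt_or_gt_of_ne hne with h | h
      · exact (hlt₂ u v hu.2 h).ne huv
      · exact (hlt₂ v u hv.2 h).ne huv.symm
  have hmaps : ∀ ij ∈ (range s ×ˢ range s).filter (fun ij => nw a b ij.1 ij.2 ≠ 0),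
      left ij ∈ (range s).image A ∪ (range s).image B := fun ij hij => by
    simp only [mem_filter, mem_product] at hij
    rcases max_choice (A ij.1) (B ij.2) with h | h <;> simp only [left, h]
    · exact mem_union_left _ (mem_image_of_mem _ hij.1.1)
    · exact mem_union_right _ (mem_image_of_mem _ hij.1.2)
  have hzero : 0 < ((range s).image A ∩ (range s).image B).card :=
    card_pos.2 ⟨0, mem_inter.2 ⟨mem_image.2 ⟨0, by simpa using hs, cumsum_zero a⟩,
      mem_image.2 ⟨0, by simpa using hs, cumsum_zero b⟩⟩⟩
  have := card_union_add_card_inter ((range s).image A) ((range s).image B)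
  have := (card_image_le (s := range s) (f := A)).trans (card_range s).le
  have := (card_image_le (s := range s) (f := B)).trans (card_range s).le
  have := card_le_card_of_injOn left hmaps hinj
  omega

lemma majFn_nw (ha : ∀ i, 0 ≤ a i) (hb : ∀ i, 0 ≤ b i) :
    MajFn (half (meet a b)) fun ij : ℕ × ℕ => nw a b ij.1 ij.2 := fun t => by
  classical
  set s := (t + 1) / 2
  refine ⟨(range s ×ˢ range s).filter fun ij => nw a b ij.1 ij.2 ≠ 0,
    (card_nw_ne_zero_le ha hb s).trans (by omega), ?_⟩
  have hle : t / 2 ≤ s := by omega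
  have := min_le_min (cumsum_mono ha hle) (cumsum_mono hb hle)
  rw [sum_filter_ne_zero, sum_product, sum_range_sum_range_nw ha hb, cumsum_half, cumsum_meet,
    cumsum_meet]
  linarith

end Northwest

section Coupling

variable {ι α : Type*} [Fintype ι] [DecidableEq ι] [Fintype α] [DecidableEq α]

def IsCouplingOf (M : (ι → α) → ℝ) (p : ι → α → ℝ) : Prop :=
  (∀ f, 0 ≤ M f) ∧ ∀ i t, ∑ f ∈ univ.filter (fun f => f i = t), M f = p i t

lemma IsCouplingOf.sum_eq {M : (ι → α) → ℝ} {p : ι → α → ℝ} (h : IsCouplingOf M p) (i : ι) :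
    ∑ f, M f = ∑ t, p i t := by
  rw [← sum_fiberwise univ (fun f => f i) M]
  exact sum_congr rfl fun t _ => h.2 i t

lemma isCouplingOf_unique [Unique ι] {p : ι → α → ℝ} (hp : ∀ t, 0 ≤ p default t) :
    IsCouplingOf (fun f => p default (f default)) p := by
  refine ⟨fun f => hp _, fun i t => ?_⟩
  rw [Unique.eq_default i, sum_filter, ← (Equiv.funUnique ι α).symm.sum_comp]
  simp

end Coupling

lemma isCouplingOf_nw {n : ℕ} {p : Fin 2 → ℕ → ℝ} (hp : ∀ c, IsProbVec n (p c)) :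
    IsCouplingOf (fun x : Fin 2 → Fin n => nw (p 0) (p 1) (x 0) (x 1)) fun c t => p c t := by
  refine ⟨fun x => nw_nonneg _ _ _ _, fun c t => ?_⟩
  rw [sum_filter, ← (piFinTwoEquiv fun _ => Fin n).symm.sum_comp, Fintype.sum_prod_type]
  fin_cases c
  · simp [sum_range_nw_row (hp 0) (hp 1), Fin.sum_univ_eq_sum_range (fun j => nw (p 0) (p 1) t j)]
  · simp [sum_range_nw_col (hp 0) (hp 1), Fin.sum_univ_eq_sum_range (fun i => nw (p 0) (p 1) i t)]

lemma majFn_nw_pair {n : ℕ} {p : Fin 2 → ℕ → ℝ} (hp : ∀ c, IsProbVec n (p c)) :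
    MajFn (half (meet (p 0) (p 1))) fun x : Fin 2 → Fin n => nw (p 0) (p 1) (x 0) (x 1) := by
  refine MajFn.comp (w := fun ij : ℕ × ℕ => nw (p 0) (p 1) ij.1 ij.2)
    (e := fun x : Fin 2 → Fin n => ((x 0 : ℕ), (x 1 : ℕ))) (fun x y hxy => ?_) (fun ij hij => ?_)
    (majFn_nw (hp 0).nonneg (hp 1).nonneg)
  · simp only [Prod.mk.injEq, Fin.val_inj] at hxy
    funext c
    fin_cases c
    exacts [hxy.1, hxy.2]
  · by_cases h1 : ij.1 < n
    · by_cases h2 : ij.2 < n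
      · exact absurd ⟨![⟨ij.1, h1⟩, ⟨ij.2, h2⟩], rfl⟩ hij
      · rw [nw_comm]; exact nw_eq_zero_of_left ((hp 1).eq_zero (not_lt.1 h2)) _
    · exact nw_eq_zero_of_left ((hp 0).eq_zero (not_lt.1 h1)) _

section Glue

variable {κ γ α β ι : Type*}

def glueEquiv (e : κ × γ ≃ ι) (E : κ → (γ → α) ≃ β) : (ι → α) ≃ (κ → β) :=
  ((e.arrowCongr (Equiv.refl α)).symm.trans (Equiv.curry κ γ α)).trans (Equiv.piCongrRight E)

lemma glueEquiv_symm_apply_apply (e : κ × γ ≃ ι) (E : κ → (γ → α) ≃ β) (g : κ → β) (j : κ)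
    (c : γ) : (glueEquiv e E).symm g (e (j, c)) = (E j).symm (g j) c := by
  simp [glueEquiv, Equiv.arrowCongr, Equiv.curry]

variable [Fintype κ] [DecidableEq κ] [Fintype γ] [DecidableEq γ]
  [Fintype α] [DecidableEq α] [Fintype β] [DecidableEq β] [Fintype ι] [DecidableEq ι]

lemma IsCouplingOf.sum_filter_eval {M : (κ → β) → ℝ} {q : κ → β → ℝ} (h : IsCouplingOf M q)
    (j : κ) (P : β → Prop) [DecidablePred P] :
    ∑ g ∈ univ.filter (fun g => P (g j)), M g = ∑ u ∈ univ.filter P, q j u := by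
  rw [← sum_congr rfl fun u _ => h.2 j u, sum_fiberwise_eq_sum_filter]
  simp

lemma IsCouplingOf.glue (e : κ × γ ≃ ι) (E : κ → (γ → α) ≃ β) {M : (κ → β) → ℝ}
    {q : κ → β → ℝ} (hM : IsCouplingOf M q) {W : κ → (γ → α) → ℝ} {p : ι → α → ℝ}
    (hW : ∀ j, IsCouplingOf (W j) fun c => p (e (j, c))) (hq : ∀ j x, q j (E j x) = W j x) :
    IsCouplingOf (M ∘ glueEquiv e E) p := by
  refine ⟨fun f => hM.1 _, fun i t => ?_⟩
  obtain ⟨⟨j, c⟩, rfl⟩ := e.surjective i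
  calc ∑ f ∈ univ.filter (fun f => f (e (j, c)) = t), M (glueEquiv e E f)
      = ∑ g ∈ univ.filter (fun g => (E j).symm (g j) c = t), M g := by
        rw [sum_filter, sum_filter, ← (glueEquiv e E).symm.sum_comp]
        simp only [glueEquiv_symm_apply_apply, Equiv.apply_symm_apply]
    _ = ∑ u ∈ univ.filter (fun u => (E j).symm u c = t), q j u :=
        hM.sum_filter_eval j fun u => (E j).symm u c = t
    _ = ∑ x ∈ univ.filter (fun x => x c = t), W j x := by
        rw [sum_filter, sum_filter, ← (E j).sum_comp]
        simp only [hq, Equiv.symm_apply_apply]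
    _ = p (e (j, c)) t := (hW j).2 c t

end Glue

lemma exists_coupling_majFn_zero {n : ℕ} {p : ℕ → ℕ → ℝ} (hp : IsProbVec n (p 0)) :
    ∃ M : (Fin (2 ^ 0) → Fin n) → ℝ, IsCouplingOf M (fun j t => p j t) ∧
      MajFn (halfIter 0 (bigMeet p (2 ^ 0 - 1))) M := by
  let : Unique (Fin (2 ^ 0)) := inferInstanceAs (Unique (Fin 1))
  refine ⟨_, isCouplingOf_unique (p := fun (j : Fin (2 ^ 0)) (t : Fin n) => p j t)
    fun t => hp.nonneg _, ?_⟩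
  refine MajFn.comp (w := p 0) (e := fun f : Fin (2 ^ 0) → Fin n => (f default : ℕ))
    (fun f g hfg => funext fun i => ?_) (fun k hk => hp.eq_zero ?_) (MajFn.refl _)
  · rw [Unique.eq_default i]; exact Fin.val_injective hfg
  · by_contra hkn
    exact hk ⟨fun _ => ⟨k, not_le.1 hkn⟩, rfl⟩

lemma exists_coupling_majFn (κ n : ℕ) (p : ℕ → ℕ → ℝ) (hp : ∀ j < 2 ^ κ, IsProbVec n (p j)) :
    ∃ M : (Fin (2 ^ κ) → Fin n) → ℝ, IsCouplingOf M (fun j t => p j t) ∧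
      MajFn (halfIter κ (bigMeet p (2 ^ κ - 1))) M := by
  induction κ generalizing n p with
  | zero => exact exists_coupling_majFn_zero (hp 0 one_pos)
  | succ κ ih =>
    set e : Fin (2 ^ κ) × Fin 2 ≃ Fin (2 ^ (κ + 1)) :=
      finProdFinEquiv.trans (finCongr (pow_succ 2 κ).symm)
    have hP : ∀ j c, IsProbVec n (p (e (j, c))) := fun j c => hp _ (e (j, c)).isLt
    set W : Fin (2 ^ κ) → (Fin 2 → Fin n) → ℝ :=
      fun j x => nw (p (e (j, 0))) (p (e (j, 1))) (x 0) (x 1)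
    have hW : ∀ j, IsCouplingOf (W j) fun c t => p (e (j, c)) t := fun j => isCouplingOf_nw (hP j)
    choose v E hv hvE using fun j => exists_isProbVec_rearrangement (hW j).1
      (by rw [(hW j).sum_eq 0]; exact (hP j 0).sum_fin_eq_one)
    set Q : ℕ → ℕ → ℝ := fun j => if h : j < 2 ^ κ then v ⟨j, h⟩ else 0
    have hQ : ∀ j : Fin (2 ^ κ), Q j = v j := fun j => dif_pos j.isLt
    obtain ⟨M, hM, hMmaj⟩ := ih _ Q fun j hj => hQ ⟨j, hj⟩ ▸ hv _
    refine ⟨M ∘ glueEquiv e E, hM.glue e E hW fun j x => by simp [hQ, hvE], ?_⟩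
    -- each pair meet dominates `bigMeet p`, so `half (bigMeet p)` is below every `Q j`
    have hhalf : Maj (half (bigMeet p (2 ^ (κ + 1) - 1))) (bigMeet Q (2 ^ κ - 1)) :=
      Maj.bigMeet fun j hj => by
        have hj' : j < 2 ^ κ := by have := Nat.two_pow_pos κ; omega
        rw [hQ ⟨j, hj'⟩]
        have hpair := ((majFn_nw_pair (hP ⟨j, hj'⟩)).of_rearrangement _ (hvE _)).maj
          (hv _).antitone (hv _).nonneg
        refine (Maj.meet (bigMeet_maj ?_) (bigMeet_maj ?_)).half.trans hpair
        · have := (e (⟨j, hj'⟩, 0)).isLt; omega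
        · have := (e (⟨j, hj'⟩, 1)).isLt; omega
    rw [halfIter_succ_eq]
    exact (MajFn.of_maj (hhalf.halfIter κ) hMmaj).comp_equiv _

theorem stmt16_general :
    ∀ (κ n : ℕ) (p : ℕ → ℕ → ℝ), (∀ j < 2 ^ κ, IsProbVec n (p j)) →
      ∃ M : (Fin (2 ^ κ) → Fin n) → ℝ, (∀ f, 0 ≤ M f) ∧
        (∀ (j : Fin (2 ^ κ)) (t : Fin n),
          ∑ f ∈ Finset.univ.filter (fun f : Fin (2 ^ κ) → Fin n => f j = t), M f =
            p j.val t.val) ∧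
        (∑ f : Fin (2 ^ κ) → Fin n, -(M f * Real.logb 2 (M f))) ≤
          H2 n (bigMeet p (2 ^ κ - 1)) + κ := by
  intro κ n p hp
  have hk : 0 < 2 ^ κ := Nat.two_pow_pos κ
  have hR : IsProbVec n (bigMeet p (2 ^ κ - 1)) := isProbVec_bigMeet fun j hj => hp j (by omega)
  obtain ⟨M, hM, hMmaj⟩ := exists_coupling_majFn κ n p hp
  refine ⟨M, hM.1, hM.2, ?_⟩
  calc _ ≤ H2 (2 ^ κ * n) (halfIter κ (bigMeet p (2 ^ κ - 1))) :=
        entropy_le_of_majFn (isProbVec_halfIter hR κ) hM.1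
          (by rw [hM.sum_eq ⟨0, hk⟩]; exact (hp 0 hk).sum_fin_eq_one) hMmaj
    _ = H2 n (bigMeet p (2 ^ κ - 1)) + κ := H2_halfIter hR κ

theorem stmt16
    (halg : ∀ (n : ℕ) (p q : ℕ → ℝ), IsProbVec n p → IsProbVec n q →
      ∃ M : ℕ → ℕ → ℝ, IsCoupling n n p q M ∧ Hmat n n M ≤ H2 n (meet p q) + 1) :
    ∀ (κ n : ℕ) (p : ℕ → ℕ → ℝ), (∀ j < 2 ^ κ, IsProbVec n (p j)) →
      ∃ M : (Fin (2 ^ κ) → Fin n) → ℝ, (∀ f, 0 ≤ M f) ∧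
        (∀ (j : Fin (2 ^ κ)) (t : Fin n),
          ∑ f ∈ Finset.univ.filter (fun f : Fin (2 ^ κ) → Fin n => f j = t), M f =
            p j.val t.val) ∧
        (∑ f : Fin (2 ^ κ) → Fin n, -(M f * Real.logb 2 (M f))) ≤
          H2 n (bigMeet p (2 ^ κ - 1)) + κ :=
  stmt16_general
end

section
/- If x ⪯ y for probability vectors x, y, then H(x) ≥ H(y) + D(y‖x), where D(y‖x) is the Kullback–Leibler divergence of y from x. -/
open Finset

/-!
Every coordinate where `x` vanishes is a coordinate where `y` vanishes, so `H(y) + D(y‖x)` is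
the cross-entropy `-∑ yₖ log xₖ`, and the claim becomes `∑ (xₖ - yₖ) log xₖ ≤ 0`. By Abel
summation this is a sum of products `(log xᵢ₊₁ - log xᵢ) · ∑_{k ≤ i} (xₖ - yₖ)` of two
non-positive factors: `log x` is non-increasing and majorization makes the prefix sums of
`x - y` non-positive.
-/

theorem Finset.sum_range_mul_nonpos_of_by_parts (f d : ℕ → ℝ) (n : ℕ)
    (hd : ∑ k ∈ range n, d k = 0)
    (hstep : ∀ i, i + 1 < n → 0 ≤ (f (i + 1) - f i) * ∑ k ∈ range (i + 1), d k) :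
    ∑ k ∈ range n, f k * d k ≤ 0 := by
  have hsum : 0 ≤ ∑ i ∈ range (n - 1), (f (i + 1) - f i) * ∑ k ∈ range (i + 1), d k :=
    sum_nonneg fun i hi => hstep i (by have := mem_range.mp hi; omega)
  have hparts := sum_range_by_parts f d n
  simp only [smul_eq_mul, hd, mul_zero, zero_sub] at hparts
  linarith

namespace IsProbVec

variable {n : ℕ} {p : ℕ → ℝ}

theorem sum_range_le_one (hp : IsProbVec n p) {i : ℕ} (hi : i ≤ n) :
    ∑ k ∈ range i, p k ≤ 1 :=
  hp.2.2.1 ▸ sum_le_sum_of_subset_of_nonneg (range_mono hi) fun k _ _ => hp.1 k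

theorem sum_range_eq_one_of_apply_eq_zero (hp : IsProbVec n p) {i : ℕ} (hi : i ≤ n)
    (hpi : p i = 0) : ∑ k ∈ range i, p k = 1 := by
  obtain ⟨hp0, hpanti, hpsum, -⟩ := hp
  have htail : ∑ k ∈ Ico i n, p k = 0 :=
    sum_eq_zero fun k hk => le_antisymm (hpi ▸ hpanti i k (mem_Ico.mp hk).1) (hp0 k)
  rw [← hpsum, ← sum_range_add_sum_Ico _ hi, htail, add_zero]

end IsProbVec

namespace Maj

variable {n : ℕ} {x y : ℕ → ℝ}

theorem sum_range_eq_one_of_apply_eq_zero (h : Maj x y) (hx : IsProbVec n x)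
    (hy : IsProbVec n y) {i : ℕ} (hi : i ≤ n) (hxi : x i = 0) :
    ∑ k ∈ range i, y k = 1 :=
  le_antisymm (hy.sum_range_le_one hi) (hx.sum_range_eq_one_of_apply_eq_zero hi hxi ▸ h i)

theorem apply_eq_zero_of_apply_eq_zero (h : Maj x y) (hx : IsProbVec n x)
    (hy : IsProbVec n y) {i : ℕ} (hi : i < n) (hxi : x i = 0) : y i = 0 := by
  have hle := hy.sum_range_le_one hi
  rw [sum_range_succ, h.sum_range_eq_one_of_apply_eq_zero hx hy hi.le hxi] at hle
  linarith [hy.1 i]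

theorem sum_mul_le_sum_mul (h : Maj x y) (hx : IsProbVec n x) (hy : IsProbVec n y)
    {g : ℝ → ℝ} (hg : MonotoneOn g (Set.Ioi 0)) :
    ∑ k ∈ range n, x k * g (x k) ≤ ∑ k ∈ range n, y k * g (x k) := by
  have hd : ∑ k ∈ range n, (x k - y k) = 0 := by
    rw [sum_sub_distrib, hx.2.2.1, hy.2.2.1, sub_self]
  have key := sum_range_mul_nonpos_of_by_parts (fun k => g (x k)) (fun k => x k - y k) n hd
    fun i hi => by
      rcases (hx.1 (i + 1)).eq_or_lt with hxi | hxi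
      -- `g 0` is arbitrary, but past a zero of `x` both prefix sums are already `1`.
      · rw [sum_sub_distrib, hx.sum_range_eq_one_of_apply_eq_zero hi.le hxi.symm,
          h.sum_range_eq_one_of_apply_eq_zero hx hy hi.le hxi.symm, sub_self, mul_zero]
      · have hanti := hx.2.1 i (i + 1) i.le_succ
        refine mul_nonneg_of_nonpos_of_nonpos ?_ ?_
        · exact sub_nonpos.mpr (hg hxi (hxi.trans_le hanti) hanti)
        · rw [sum_sub_distrib, sub_nonpos]
          exact h (i + 1)
  simp only [mul_sub, sum_sub_distrib, sub_nonpos] at key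
  simpa only [mul_comm] using key

end Maj

theorem H2_add_sum_mul_logb_div_eq {n : ℕ} {x y : ℕ → ℝ}
    (hxy : ∀ k < n, x k = 0 → y k = 0) :
    H2 n y + ∑ k ∈ range n, y k * Real.logb 2 (y k / x k) =
      -∑ k ∈ range n, y k * Real.logb 2 (x k) := by
  rw [H2, ← sum_add_distrib, ← sum_neg_distrib]
  refine sum_congr rfl fun k hk => ?_
  by_cases hyk : y k = 0
  · simp [hyk]
  · have hxk : x k ≠ 0 := fun hxk => hyk (hxy k (mem_range.mp hk) hxk)
    rw [Real.logb_div hyk hxk]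
    ring

theorem stmt17 (n : ℕ) (x y : ℕ → ℝ) (hx : IsProbVec n x) (hy : IsProbVec n y)
    (h : Maj x y) :
    H2 n y + ∑ i ∈ Finset.range n, y i * Real.logb 2 (y i / x i) ≤ H2 n x := by
  rw [H2_add_sum_mul_logb_div_eq fun k hk => h.apply_eq_zero_of_apply_eq_zero hx hy hk,
    H2, sum_neg_distrib, neg_le_neg_iff]
  exact h.sum_mul_le_sum_mul hx hy (Real.strictMonoOn_logb one_lt_two).monotoneOn
end
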